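/- arXiv:2004.13914 — 8 statements merged into one kernel-verified Lean document; each statement's English description precedes it below -/
import Mathlib

section
/- Let p ≥ 2 be an integer, let λ_1 > λ_2 > ⋯ > λ_p > 0 be real numbers, let 1 ≤ r ≤ p−1, and set σ_r*² = (1/(p−r))·∑_{ℓ=r+1}^p λ_ℓ. Then for every j with 1 ≤ j ≤ r, ∑_{ℓ=r+1}^p λ_ℓ(λ_j − σ_r*²)/(σ_r*²(λ_j − λ_ℓ)) ≥ p − r; equivalently, ξ_{j|r} := (λ_j/σ_r*²)·∑_{ℓ=r+1}^p (λ_ℓ − σ_r*²)/(λ_j − λ_ℓ) ≥ 0. (Counting the number of free parameters underestimates the GIC model complexity of the eigenvector block.) -/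
open Finset

/-- GIC eigenvector-block complexity: counting free parameters underestimates it.
For eigenvalues `λ 1 > λ 2 > ⋯ > λ p > 0`, `1 ≤ r ≤ p - 1`, and tail average
`σ_r*² = (1/(p-r)) ∑_{ℓ=r+1}^p λ ℓ`, every `j ≤ r` satisfies
`∑_{ℓ>r} λ ℓ (λ j - σ²)/(σ² (λ j - λ ℓ)) ≥ p - r`, equivalently `ξ_{j|r} ≥ 0`. -/
theorem stmt0 (p r : ℕ) (hp : 2 ≤ p) (hr1 : 1 ≤ r) (hrp : r ≤ p - 1)
    (lam : ℕ → ℝ)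
    (hdec : ∀ i j : ℕ, 1 ≤ i → i < j → j ≤ p → lam j < lam i)
    (hpos : 0 < lam p)
    (s2 : ℝ) (hs2 : s2 = (1 / ((p : ℝ) - (r : ℝ))) * ∑ l ∈ Finset.Icc (r + 1) p, lam l) :
    ∀ j : ℕ, 1 ≤ j → j ≤ r →
      ((∑ l ∈ Finset.Icc (r + 1) p, lam l * (lam j - s2) / (s2 * (lam j - lam l)))
          ≥ (p : ℝ) - (r : ℝ)) ∧
      ((lam j / s2) * ∑ l ∈ Finset.Icc (r + 1) p, (lam l - s2) / (lam j - lam l) ≥ 0) := by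
  intro j hj1 hjr
  have hrp' : r + 1 ≤ p := by omega
  have hmpos : (0:ℝ) < (p : ℝ) - (r : ℝ) := by
    have : r < p := by omega
    have : (r:ℝ) < (p:ℝ) := by exact_mod_cast this
    linarith
  have hne : (Finset.Icc (r + 1) p).Nonempty := Finset.nonempty_Icc.mpr hrp'
  have hcard : ((Finset.Icc (r + 1) p).card : ℝ) = (p : ℝ) - (r : ℝ) := by
    rw [Nat.card_Icc]
    have : p + 1 - (r + 1) = p - r := by omega
    rw [this, Nat.cast_sub (by omega : r ≤ p)]
  have hlam_lt : ∀ l ∈ Finset.Icc (r + 1) p, lam l < lam j := by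
    intro l hl
    rw [Finset.mem_Icc] at hl
    exact hdec j l hj1 (by omega) hl.2
  have hlam_pos : ∀ l ∈ Finset.Icc (r + 1) p, 0 < lam l := by
    intro l hl
    rw [Finset.mem_Icc] at hl
    rcases eq_or_lt_of_le hl.2 with h | h
    · rw [h]; exact hpos
    · exact hpos.trans (hdec l p (by omega) h le_rfl)
  have hS_pos : 0 < ∑ l ∈ Finset.Icc (r + 1) p, lam l :=
    Finset.sum_pos hlam_pos hne
  have hs2_pos : 0 < s2 := by
    rw [hs2]; positivity
  have hsum_eq : ∑ l ∈ Finset.Icc (r + 1) p, lam l = ((p : ℝ) - (r : ℝ)) * s2 := by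
    rw [hs2]; field_simp
  -- lam j > s2
  have hjs2 : s2 < lam j := by
    have hlt : ∑ l ∈ Finset.Icc (r + 1) p, lam l
        < ∑ l ∈ Finset.Icc (r + 1) p, lam j :=
      Finset.sum_lt_sum_of_nonempty hne hlam_lt
    rw [Finset.sum_const, nsmul_eq_mul, hcard, hsum_eq] at hlt
    nlinarith
  have hjpos : 0 < lam j := hs2_pos.trans hjs2
  have hzero : ∑ l ∈ Finset.Icc (r + 1) p, (lam l - s2) = 0 := by
    rw [Finset.sum_sub_distrib, Finset.sum_const, nsmul_eq_mul, hcard, hsum_eq]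
    ring
  have hTsplit : ∑ l ∈ Finset.Icc (r + 1) p, (lam l - s2) / (lam j - lam l)
      = ∑ l ∈ Finset.Icc (r + 1) p,
          ((lam l - s2) ^ 2 / ((lam j - lam l) * (lam j - s2))
            + (lam l - s2) / (lam j - s2)) := by
    refine Finset.sum_congr rfl fun l hl => ?_
    have h1 : lam j - lam l ≠ 0 := sub_ne_zero.mpr (hlam_lt l hl).ne'
    have h2 : lam j - s2 ≠ 0 := sub_ne_zero.mpr hjs2.ne'
    field_simp
    ring
  have hTnn : 0 ≤ ∑ l ∈ Finset.Icc (r + 1) p, (lam l - s2) / (lam j - lam l) := by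
    rw [hTsplit, Finset.sum_add_distrib]
    have h2 : ∑ l ∈ Finset.Icc (r + 1) p, (lam l - s2) / (lam j - s2) = 0 := by
      rw [← Finset.sum_div, hzero, zero_div]
    rw [h2, add_zero]
    refine Finset.sum_nonneg fun l hl => ?_
    have h1 : 0 < lam j - lam l := sub_pos.mpr (hlam_lt l hl)
    have h2 : 0 < lam j - s2 := sub_pos.mpr hjs2
    positivity
  have hxi : 0 ≤ (lam j / s2) * ∑ l ∈ Finset.Icc (r + 1) p, (lam l - s2) / (lam j - lam l) :=
    mul_nonneg (by positivity) hTnn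
  constructor
  · have hterm : ∀ l ∈ Finset.Icc (r + 1) p,
        lam l * (lam j - s2) / (s2 * (lam j - lam l))
          = 1 + (lam j / s2) * ((lam l - s2) / (lam j - lam l)) := by
      intro l hl
      have h1 : lam j - lam l ≠ 0 := sub_ne_zero.mpr (hlam_lt l hl).ne'
      have h2 : s2 ≠ 0 := hs2_pos.ne'
      field_simp
      ring
    rw [Finset.sum_congr rfl hterm, Finset.sum_add_distrib, Finset.sum_const,
      nsmul_eq_mul, mul_one, hcard, ← Finset.mul_sum]
    linarith [hxi]
  · exact hxi
end

section
/- Let p ≥ 2 be an integer, let λ_1 > λ_2 > ⋯ > λ_p > 0 be real numbers, and let 0 ≤ r ≤ p−1. Define σ_r*² = (1/(p−r))∑_{ℓ=r+1}^p λ_ℓ, the GIC complexity b_r^{GIC} = [C(r,2) + ∑_{j=1}^r ∑_{ℓ=r+1}^p λ_ℓ(λ_j − σ_r*²)/(σ_r*²(λ_j − λ_ℓ))] + r + [(1/(p−r))∑_{ℓ=r+1}^p λ_ℓ²]/(σ_r*²)² + p, and the free-parameter count b_r = [pr − r(r+1)/2] + r + 1 + p. Then b_r^{GIC} ≥ b_r.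 -/
open Finset

/-!
With `σ²` the mean of the tail eigenvalues `λ_ℓ`, `ℓ > r`, both excess terms of `b_r^GIC` over
`b_r` are nonnegative by Cauchy–Schwarz. The mean of the squared tail eigenvalues is at least
`σ⁴`, and for each spike `λ_j > λ_ℓ` the AM–HM inequality for the gaps `λ_j - λ_ℓ` shows that
its inner sum is at least `p - r`; summing over `j ≤ r` recovers the `r (p - r)` loading
parameters that `b_r` counts beyond `C(r, 2)`.
-/

section Mean

variable {ι : Type*} {s : Finset ι} {x : ι → ℝ} {σ c : ℝ}

lemma lt_mean_of_forall_lt (hs : s.Nonempty) (hσ : ∑ i ∈ s, x i = #s * σ)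
    (hx : ∀ i ∈ s, c < x i) : c < σ := by
  have h := sum_lt_sum_of_nonempty hs hx
  rw [sum_const, nsmul_eq_mul, hσ] at h
  exact lt_of_mul_lt_mul_left h (Nat.cast_nonneg _)

lemma mean_lt_of_forall_lt (hs : s.Nonempty) (hσ : ∑ i ∈ s, x i = #s * σ)
    (hx : ∀ i ∈ s, x i < c) : σ < c := by
  have h := sum_lt_sum_of_nonempty hs hx
  rw [sum_const, nsmul_eq_mul, hσ] at h
  exact lt_of_mul_lt_mul_left h (Nat.cast_nonneg _)

lemma one_le_mean_sq_div_sq (hs : s.Nonempty) (hσ : ∑ i ∈ s, x i = #s * σ) (hσ0 : σ ≠ 0) :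
    1 ≤ (1 / (#s : ℝ) * ∑ i ∈ s, x i ^ 2) / σ ^ 2 := by
  have hcard : (0 : ℝ) < #s := by exact_mod_cast hs.card_pos
  have h := sq_sum_le_card_mul_sum_sq (s := s) (f := x)
  rw [hσ] at h
  rw [one_le_div (by positivity), one_div_mul_eq_div, le_div_iff₀ hcard]
  nlinarith

/-- AM–HM for the gaps `c - x i` gives `#s ≤ (c - σ) * ∑ 1 / (c - x i)`, and the summand is
`(c - σ) / σ * (c / (c - x i) - 1)`. -/
lemma card_le_sum_mul_div (hσ : ∑ i ∈ s, x i = #s * σ) (hσ0 : 0 < σ) (hσc : σ < c)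
    (hx : ∀ i ∈ s, x i < c) :
    (#s : ℝ) ≤ ∑ i ∈ s, x i * (c - σ) / (σ * (c - x i)) := by
  rcases s.eq_empty_or_nonempty with rfl | hs
  · simp
  have hcard : (0 : ℝ) < #s := by exact_mod_cast hs.card_pos
  have hgap : ∀ i ∈ s, 0 < c - x i := fun i hi => sub_pos.mpr (hx i hi)
  have hHM : (#s : ℝ) ≤ (c - σ) * ∑ i ∈ s, 1 / (c - x i) := by
    have h := sq_sum_div_le_sum_sq_div s (fun _ => (1 : ℝ)) hgap
    simp only [sum_sub_distrib, sum_const, nsmul_eq_mul, hσ, ← mul_sub, mul_one, one_pow] at h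
    rwa [sq, mul_div_mul_left _ _ hcard.ne', div_le_iff₀' (sub_pos.mpr hσc)] at h
  have hterm : ∀ i ∈ s, x i * (c - σ) / (σ * (c - x i))
      = (c - σ) / σ * (c * (1 / (c - x i)) - 1) := by
    intro i hi
    have := (hgap i hi).ne'
    field_simp
    ring
  rw [sum_congr rfl hterm, ← mul_sum, sum_sub_distrib, ← mul_sum, sum_const, nsmul_one,
    div_mul_eq_mul_div, le_div_iff₀ hσ0]
  nlinarith

end Mean

/-- The GIC model complexity `b_r^GIC` of the rank-`r` simple spiked working model is at
least the number of free parameters `b_r`, for eigenvalues `λ 1 > ⋯ > λ p > 0` and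
`0 ≤ r ≤ p - 1`. -/
theorem stmt1 (p r : ℕ) (hp : 2 ≤ p) (hrp : r ≤ p - 1)
    (lam : ℕ → ℝ)
    (hdec : ∀ i j : ℕ, 1 ≤ i → i < j → j ≤ p → lam j < lam i)
    (hpos : 0 < lam p)
    (s2 : ℝ) (hs2 : s2 = (1 / ((p : ℝ) - (r : ℝ))) * ∑ l ∈ Finset.Icc (r + 1) p, lam l)
    (bGIC : ℝ)
    (hbGIC : bGIC =
      (((r : ℝ) * ((r : ℝ) - 1) / 2) +
        ∑ j ∈ Finset.Icc 1 r, ∑ l ∈ Finset.Icc (r + 1) p,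
          lam l * (lam j - s2) / (s2 * (lam j - lam l)))
      + (r : ℝ)
      + ((1 / ((p : ℝ) - (r : ℝ))) * ∑ l ∈ Finset.Icc (r + 1) p, (lam l) ^ 2) / s2 ^ 2
      + (p : ℝ))
    (br : ℝ)
    (hbr : br = ((p : ℝ) * (r : ℝ) - (r : ℝ) * ((r : ℝ) + 1) / 2) + (r : ℝ) + 1 + (p : ℝ)) :
    bGIC ≥ br := by
  set T := Icc (r + 1) p
  have hT : T.Nonempty := nonempty_Icc.mpr (by omega)
  have hcard : (#T : ℝ) = p - r := by
    rw [Nat.card_Icc, Nat.add_sub_add_right, Nat.cast_sub (by omega)]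
  have hmean : ∑ l ∈ T, lam l = #T * s2 := by
    have hpr : (p : ℝ) - r ≠ 0 := hcard ▸ Nat.cast_ne_zero.mpr hT.card_pos.ne'
    rw [hs2, hcard]
    field_simp
  have hlam_pos : ∀ l ∈ T, 0 < lam l := fun l hl => by
    rcases (mem_Icc.mp hl).2.eq_or_lt with hlp | hlp
    exacts [hlp ▸ hpos, hpos.trans (hdec l p (by grind) hlp le_rfl)]
  have hs2_pos : 0 < s2 := lt_mean_of_forall_lt hT hmean hlam_pos
  have hspike : ∀ j ∈ Icc 1 r,
      (#T : ℝ) ≤ ∑ l ∈ T, lam l * (lam j - s2) / (s2 * (lam j - lam l)) := fun j hj => by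
    have hlt : ∀ l ∈ T, lam l < lam j := fun l hl =>
      hdec j l (mem_Icc.mp hj).1 (by grind) (mem_Icc.mp hl).2
    exact card_le_sum_mul_div hmean hs2_pos (mean_lt_of_forall_lt hT hmean hlt) hlt
  have hcross := card_nsmul_le_sum _ _ _ hspike
  have hquad := one_le_mean_sq_div_sq hT hmean hs2_pos.ne'
  rw [hcard] at hquad hcross
  rw [Nat.card_Icc, nsmul_eq_mul, Nat.add_sub_cancel] at hcross
  rw [hbGIC, hbr]
  linarith
end

section
/- Let p ≥ 3 be an integer, let 0 ≤ r ≤ p−2, and let λ_1 > ⋯ > λ_r > λ_{r+1} ≥ λ_{r+2} ≥ ⋯ ≥ λ_p > 0 be real numbers. Define σ_r*² = (1/(p−r))∑_{ℓ=r+1}^p λ_ℓ, b_r^{GIC} = [C(r,2) + ∑_{j=1}^r ∑_{ℓ=r+1}^p λ_ℓ(λ_j − σ_r*²)/(σ_r*²(λ_j − λ_ℓ))] + r + [(1/(p−r))∑_{ℓ=r+1}^p λ_ℓ²]/(σ_r*²)² + p, and b_r = [pr − r(r+1)/2] + r + 1 + p. Then b_r^{GIC} = b_r if and only if λ_{r+1}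 = λ_{r+2} = ⋯ = λ_p, i.e., if and only if the tail eigenvalues are all equal. -/
open Finset

/-- `b_r^GIC = b_r` if and only if the tail eigenvalues `λ_{r+1} ≥ ⋯ ≥ λ_p` are all equal,
for eigenvalues `λ 1 > ⋯ > λ r > λ (r+1) ≥ ⋯ ≥ λ p > 0`, `p ≥ 3`, `0 ≤ r ≤ p - 2`. -/
theorem stmt2 (p r : ℕ) (hp : 3 ≤ p) (hrp : r ≤ p - 2)
    (lam : ℕ → ℝ)
    (hlead : ∀ i j : ℕ, 1 ≤ i → i < j → j ≤ r + 1 → lam j < lam i)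
    (htail : ∀ i j : ℕ, r + 1 ≤ i → i ≤ j → j ≤ p → lam j ≤ lam i)
    (hpos : 0 < lam p)
    (s2 : ℝ) (hs2 : s2 = (1 / ((p : ℝ) - (r : ℝ))) * ∑ l ∈ Finset.Icc (r + 1) p, lam l)
    (bGIC : ℝ)
    (hbGIC : bGIC =
      (((r : ℝ) * ((r : ℝ) - 1) / 2) +
        ∑ j ∈ Finset.Icc 1 r, ∑ l ∈ Finset.Icc (r + 1) p,
          lam l * (lam j - s2) / (s2 * (lam j - lam l)))
      + (r : ℝ)
      + ((1 / ((p : ℝ) - (r : ℝ))) * ∑ l ∈ Finset.Icc (r + 1) p, (lam l) ^ 2) / s2 ^ 2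
      + (p : ℝ))
    (br : ℝ)
    (hbr : br = ((p : ℝ) * (r : ℝ) - (r : ℝ) * ((r : ℝ) + 1) / 2) + (r : ℝ) + 1 + (p : ℝ)) :
    bGIC = br ↔ (∀ l : ℕ, r + 1 ≤ l → l ≤ p → lam l = lam (r + 1)) := by
  have hr2 : r + 2 ≤ p := by omega
  set T := Finset.Icc (r + 1) p with hT
  have hmemT : r + 1 ∈ T := by
    rw [hT, Finset.mem_Icc]; omega
  have hcardR : (T.card : ℝ) = (p : ℝ) - r := by
    rw [hT, Nat.card_Icc]
    have h1 : p + 1 - (r + 1) = p - r := by omega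
    rw [h1, Nat.cast_sub (by omega : r ≤ p)]
  have hnpos : (0 : ℝ) < (p : ℝ) - r := by
    have : (r : ℝ) < p := by exact_mod_cast (by omega : r < p)
    linarith
  have hnne : ((p : ℝ) - r) ≠ 0 := ne_of_gt hnpos
  have htail_pos : ∀ l ∈ T, 0 < lam l := by
    intro l hl
    rw [hT, Finset.mem_Icc] at hl
    exact lt_of_lt_of_le hpos (htail l p hl.1 hl.2 le_rfl)
  have htail_le : ∀ l ∈ T, lam l ≤ lam (r + 1) := by
    intro l hl
    rw [hT, Finset.mem_Icc] at hl
    exact htail (r + 1) l le_rfl hl.1 hl.2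
  have hsum : ∑ l ∈ T, lam l = ((p : ℝ) - r) * s2 := by
    rw [hs2]; field_simp
  have hs2pos : 0 < s2 := by
    have hsumpos : 0 < ∑ l ∈ T, lam l := Finset.sum_pos htail_pos ⟨r + 1, hmemT⟩
    rw [hs2]
    exact mul_pos (one_div_pos.mpr hnpos) hsumpos
  have hs2ne : s2 ≠ 0 := ne_of_gt hs2pos
  have hs2le : s2 ≤ lam (r + 1) := by
    have h1 : ∑ l ∈ T, lam l ≤ ((p : ℝ) - r) * lam (r + 1) := by
      calc ∑ l ∈ T, lam l ≤ ∑ _l ∈ T, lam (r + 1) := Finset.sum_le_sum htail_le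
        _ = T.card * lam (r + 1) := by rw [Finset.sum_const, nsmul_eq_mul]
        _ = ((p : ℝ) - r) * lam (r + 1) := by rw [hcardR]
    exact le_of_mul_le_mul_left (by linarith [hsum]) hnpos
  have hlead' : ∀ j ∈ Finset.Icc 1 r, s2 < lam j ∧ ∀ l ∈ T, lam l < lam j := by
    intro j hj
    rw [Finset.mem_Icc] at hj
    have hj1 : lam (r + 1) < lam j := hlead j (r + 1) hj.1 (by omega) le_rfl
    exact ⟨by linarith, fun l hl => lt_of_le_of_lt (htail_le l hl) hj1⟩
  -- B : sum of squared deviations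
  have h0 : ∑ l ∈ T, (lam l - s2) = 0 := by
    rw [Finset.sum_sub_distrib, Finset.sum_const, nsmul_eq_mul, hcardR, hsum]; ring
  have hB' : ∑ l ∈ T, lam l * (lam l - s2) = ∑ l ∈ T, (lam l - s2) ^ 2 := by
    calc ∑ l ∈ T, lam l * (lam l - s2)
        = ∑ l ∈ T, ((lam l - s2) ^ 2 + s2 * (lam l - s2)) :=
          Finset.sum_congr rfl (fun l _ => by ring)
      _ = (∑ l ∈ T, (lam l - s2) ^ 2) + s2 * ∑ l ∈ T, (lam l - s2) := by
          rw [Finset.sum_add_distrib, ← Finset.mul_sum]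
      _ = ∑ l ∈ T, (lam l - s2) ^ 2 := by rw [h0]; ring
  have hBnonneg : 0 ≤ ∑ l ∈ T, (lam l - s2) ^ 2 :=
    Finset.sum_nonneg fun l _ => sq_nonneg _
  have hsq : ∑ l ∈ T, (lam l) ^ 2 = (∑ l ∈ T, (lam l - s2) ^ 2) + ((p : ℝ) - r) * s2 ^ 2 := by
    calc ∑ l ∈ T, (lam l) ^ 2
        = ∑ l ∈ T, (lam l * (lam l - s2) + s2 * lam l) :=
          Finset.sum_congr rfl (fun l _ => by ring)
      _ = (∑ l ∈ T, lam l * (lam l - s2)) + s2 * ∑ l ∈ T, lam l := by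
          rw [Finset.sum_add_distrib, ← Finset.mul_sum]
      _ = _ := by rw [hB', hsum]; ring
  -- rewrite the double sum
  have hdouble : ∀ j ∈ Finset.Icc 1 r,
      ∑ l ∈ T, lam l * (lam j - s2) / (s2 * (lam j - lam l)) =
      ((p : ℝ) - r) + ∑ l ∈ T, lam l * (lam l - s2) / (s2 * (lam j - lam l)) := by
    intro j hj
    have hjl := (hlead' j hj).2
    have step : ∑ l ∈ T, lam l * (lam j - s2) / (s2 * (lam j - lam l)) =
        ∑ l ∈ T, (lam l / s2 + lam l * (lam l - s2) / (s2 * (lam j - lam l))) := by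
      refine Finset.sum_congr rfl (fun l hl => ?_)
      have h1 : lam j - lam l ≠ 0 := ne_of_gt (by linarith [hjl l hl])
      field_simp
      ring
    rw [step, Finset.sum_add_distrib, ← Finset.sum_div, hsum, mul_div_assoc,
      div_self hs2ne, mul_one]
  have hds : ∑ j ∈ Finset.Icc 1 r, ∑ l ∈ T, lam l * (lam j - s2) / (s2 * (lam j - lam l)) =
      (r : ℝ) * ((p : ℝ) - r) +
      ∑ j ∈ Finset.Icc 1 r, ∑ l ∈ T, lam l * (lam l - s2) / (s2 * (lam j - lam l)) := by
    rw [Finset.sum_congr rfl hdouble, Finset.sum_add_distrib, Finset.sum_const,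
      nsmul_eq_mul, Nat.card_Icc]
    norm_num
  have hm : ((1 / ((p : ℝ) - r)) * ∑ l ∈ T, (lam l) ^ 2) / s2 ^ 2 =
      1 + (∑ l ∈ T, (lam l - s2) ^ 2) / (((p : ℝ) - r) * s2 ^ 2) := by
    rw [hsq]
    field_simp
    ring
  have key : bGIC - br =
      (∑ j ∈ Finset.Icc 1 r, ∑ l ∈ T, lam l * (lam l - s2) / (s2 * (lam j - lam l))) +
      (∑ l ∈ T, (lam l - s2) ^ 2) / (((p : ℝ) - r) * s2 ^ 2) := by
    rw [hbGIC, hbr, hds, hm]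
    ring
  -- nonnegativity of each inner sum
  have hA : ∀ j ∈ Finset.Icc 1 r,
      0 ≤ ∑ l ∈ T, lam l * (lam l - s2) / (s2 * (lam j - lam l)) := by
    intro j hj
    have hjs2 := (hlead' j hj).1
    have hjl := (hlead' j hj).2
    have step : ∀ l ∈ T, lam l * (lam l - s2) / (s2 * (lam j - s2)) ≤
        lam l * (lam l - s2) / (s2 * (lam j - lam l)) := by
      intro l hl
      have ha : 0 < lam l := htail_pos l hl
      have h1 : 0 < s2 * (lam j - s2) := mul_pos hs2pos (by linarith)
      have h2 : 0 < s2 * (lam j - lam l) := mul_pos hs2pos (by linarith [hjl l hl])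
      rw [div_le_div_iff₀ h1 h2]
      nlinarith [mul_nonneg (mul_nonneg hs2pos.le ha.le) (sq_nonneg (lam l - s2))]
    calc (0 : ℝ) ≤ ∑ l ∈ T, lam l * (lam l - s2) / (s2 * (lam j - s2)) := by
          rw [← Finset.sum_div, hB']
          exact div_nonneg hBnonneg (mul_pos hs2pos (by linarith)).le
      _ ≤ _ := Finset.sum_le_sum step
  have hSAnn : 0 ≤ ∑ j ∈ Finset.Icc 1 r,
      ∑ l ∈ T, lam l * (lam l - s2) / (s2 * (lam j - lam l)) :=
    Finset.sum_nonneg hA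
  have hBtnn : 0 ≤ (∑ l ∈ T, (lam l - s2) ^ 2) / (((p : ℝ) - r) * s2 ^ 2) :=
    div_nonneg hBnonneg (by positivity)
  constructor
  · intro h
    have hzero : (∑ j ∈ Finset.Icc 1 r, ∑ l ∈ T, lam l * (lam l - s2) / (s2 * (lam j - lam l))) +
        (∑ l ∈ T, (lam l - s2) ^ 2) / (((p : ℝ) - r) * s2 ^ 2) = 0 := by
      rw [← key, h]; ring
    have hBt0 : (∑ l ∈ T, (lam l - s2) ^ 2) / (((p : ℝ) - r) * s2 ^ 2) = 0 := by linarith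
    have hB0 : ∑ l ∈ T, (lam l - s2) ^ 2 = 0 := by
      rcases div_eq_zero_iff.mp hBt0 with h' | h'
      · exact h'
      · exact absurd h' (by positivity)
    have hall : ∀ x ∈ T, (lam x - s2) ^ 2 = 0 :=
      (Finset.sum_eq_zero_iff_of_nonneg (fun x _ => sq_nonneg _)).mp hB0
    intro l hl1 hl2
    have hmeml : l ∈ T := by rw [hT, Finset.mem_Icc]; exact ⟨hl1, hl2⟩
    have e1 : lam l = s2 := sub_eq_zero.mp (sq_eq_zero_iff.mp (hall l hmeml))
    have e2 : lam (r + 1) = s2 := sub_eq_zero.mp (sq_eq_zero_iff.mp (hall (r + 1) hmemT))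
    rw [e1, e2]
  · intro h
    have hs2eq : s2 = lam (r + 1) := by
      have hsum2 : ∑ l ∈ T, lam l = ((p : ℝ) - r) * lam (r + 1) := by
        calc ∑ l ∈ T, lam l = ∑ _l ∈ T, lam (r + 1) := by
              refine Finset.sum_congr rfl (fun l hl => ?_)
              rw [hT, Finset.mem_Icc] at hl
              exact h l hl.1 hl.2
          _ = T.card * lam (r + 1) := by rw [Finset.sum_const, nsmul_eq_mul]
          _ = _ := by rw [hcardR]
      exact mul_left_cancel₀ hnne (by linarith [hsum])
    have hz : ∀ l ∈ T, lam l - s2 = 0 := by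
      intro l hl
      rw [hT, Finset.mem_Icc] at hl
      rw [hs2eq, h l hl.1 hl.2, sub_self]
    have hB0 : ∑ l ∈ T, (lam l - s2) ^ 2 = 0 :=
      Finset.sum_eq_zero fun l hl => by rw [hz l hl]; norm_num
    have hSA0 : ∑ j ∈ Finset.Icc 1 r, ∑ l ∈ T, lam l * (lam l - s2) / (s2 * (lam j - lam l)) = 0 :=
      Finset.sum_eq_zero fun j _ => Finset.sum_eq_zero fun l hl => by
        rw [hz l hl, mul_zero, zero_div]
    have : bGIC - br = 0 := by rw [key, hSA0, hB0]; simp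
    linarith
end

section
/- Let ν be a Borel probability measure on ℝ whose support is contained in [0, B] for some real B ≥ 1, with mean ∫ s dν(s) = 1, and suppose ν is not the Dirac measure at 1. Define g(u) = (u−1)·∫ s/(u−s) dν(s) for u ∈ (B, ∞). Then g is strictly decreasing on (B, ∞). Consequently, for any c > 0 the function κ(u) = c·g(u) is strictly decreasing on (B, ∞). -/
/-!
Using `∫ s dν = 1`, the algebraic identity
`(u - 1) s / (u - s) = s + (s - 1) / (u - 1) + (s - 1)² u / ((u - s)(u - 1))`
gives `g u = 1 + ∫ (s - 1)² u / ((u - s)(u - 1)) dν(s)` for `u > B`. For each `s ≤ B` the weight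
`u / ((u - s)(u - 1))` is strictly decreasing on `(B, ∞)`, and the factor `(s - 1)²` is positive
on `{s ≠ 1}`, a set of positive `ν`-measure unless `ν = δ₁`.
-/

open MeasureTheory Set

lemma MeasureTheory.Measure.eq_dirac_of_ae_eq {α : Type*} [MeasurableSpace α] {μ : Measure α}
    [IsProbabilityMeasure μ] {a : α} (h : ∀ᵐ x ∂μ, x = a) : μ = Measure.dirac a :=
  calc μ = μ.map id := Measure.map_id.symm
    _ = μ.map (fun _ ↦ a) := Measure.map_congr h
    _ = Measure.dirac a := by rw [Measure.map_const, measure_univ, one_smul]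

lemma ContinuousOn.integrable_of_ae_mem {α E : Type*} [TopologicalSpace α] [T2Space α]
    [MeasurableSpace α] [OpensMeasurableSpace α] [NormedAddCommGroup E] {μ : Measure α}
    [IsFiniteMeasure μ] {K : Set α} {f : α → E} (hf : ContinuousOn f K) (hK : IsCompact K)
    (hμ : ∀ᵐ x ∂μ, x ∈ K) : Integrable f μ := by
  have := hf.integrableOn_compact hK (μ := μ)
  rwa [IntegrableOn, Measure.restrict_eq_self_of_ae_mem hμ] at this

lemma sub_one_mul_div_sub_eq {u s : ℝ} (hus : u - s ≠ 0) (hu : u - 1 ≠ 0) :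
    (u - 1) * (s / (u - s)) = s + (s - 1) / (u - 1) + (s - 1) ^ 2 * (u / ((u - s) * (u - 1))) := by
  field_simp
  ring

lemma strictAntiOn_div_sub_mul_sub_one {s B : ℝ} (hs : s ≤ B) (hB : 1 ≤ B) :
    StrictAntiOn (fun u ↦ u / ((u - s) * (u - 1))) (Ioi B) := by
  intro u (hu : B < u) v (hv : B < v) huv
  rw [div_lt_div_iff₀ (by nlinarith) (by nlinarith)]
  -- `u (v - s) (v - 1) - v (u - s) (u - 1) = (v - u) (u v - s)`
  nlinarith [mul_pos (sub_pos.2 huv) (show 0 < u * v - s by nlinarith)]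

section

variable {B : ℝ} {ν : Measure ℝ}

lemma integrable_sq_sub_one_mul_div [IsFiniteMeasure ν] (hB : 1 ≤ B)
    (hν : ∀ᵐ s ∂ν, s ∈ Icc 0 B) {u : ℝ} (hu : B < u) :
    Integrable (fun s ↦ (s - 1) ^ 2 * (u / ((u - s) * (u - 1)))) ν := by
  refine ContinuousOn.integrable_of_ae_mem ?_ isCompact_Icc hν
  refine ContinuousOn.mul (by fun_prop) (continuousOn_const.div (by fun_prop) ?_)
  intro s hs
  exact mul_ne_zero (by linarith [hs.2]) (by linarith)

lemma sub_one_mul_integral_div_sub_eq [IsProbabilityMeasure ν] (hB : 1 ≤ B)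
    (hν : ∀ᵐ s ∂ν, s ∈ Icc 0 B) (hmean : ∫ s, s ∂ν = 1) {u : ℝ} (hu : B < u) :
    (u - 1) * ∫ s, s / (u - s) ∂ν = 1 + ∫ s, (s - 1) ^ 2 * (u / ((u - s) * (u - 1))) ∂ν := by
  have hid : Integrable (fun s : ℝ ↦ s) ν := continuousOn_id.integrable_of_ae_mem isCompact_Icc hν
  have hlin : Integrable (fun s : ℝ ↦ (s - 1) / (u - 1)) ν :=
    (hid.sub (integrable_const 1)).div_const _
  have hsum : Integrable (fun s : ℝ ↦ s + (s - 1) / (u - 1)) ν := hid.add hlin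
  rw [← integral_const_mul]
  calc ∫ s, (u - 1) * (s / (u - s)) ∂ν
      = ∫ s, s + (s - 1) / (u - 1) + (s - 1) ^ 2 * (u / ((u - s) * (u - 1))) ∂ν := by
        refine integral_congr_ae ?_
        filter_upwards [hν] with s hs
        exact sub_one_mul_div_sub_eq (by linarith [hs.2]) (by linarith)
    _ = 1 + ∫ s, (s - 1) ^ 2 * (u / ((u - s) * (u - 1))) ∂ν := by
        rw [integral_add hsum (integrable_sq_sub_one_mul_div hB hν hu), integral_add hid hlin,
          integral_div, integral_sub hid (integrable_const 1), hmean]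
        simp

lemma strictAntiOn_integral_sq_sub_one_mul_div [IsProbabilityMeasure ν] (hB : 1 ≤ B)
    (hν : ∀ᵐ s ∂ν, s ∈ Icc 0 B) (hν1 : ν ≠ Measure.dirac 1) :
    StrictAntiOn (fun u ↦ ∫ s, (s - 1) ^ 2 * (u / ((u - s) * (u - 1))) ∂ν) (Ioi B) := by
  intro u hu v hv huv
  have hw : ∀ᵐ s ∂ν, v / ((v - s) * (v - 1)) < u / ((u - s) * (u - 1)) := by
    filter_upwards [hν] with s hs
    exact strictAntiOn_div_sub_mul_sub_one hs.2 hB hu hv huv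
  have hint : Integrable (fun s ↦ (s - 1) ^ 2 * (u / ((u - s) * (u - 1))) -
      (s - 1) ^ 2 * (v / ((v - s) * (v - 1)))) ν :=
    (integrable_sq_sub_one_mul_div hB hν hu).sub (integrable_sq_sub_one_mul_div hB hν hv)
  have hnonneg : 0 ≤ᵐ[ν] fun s ↦ (s - 1) ^ 2 * (u / ((u - s) * (u - 1))) -
      (s - 1) ^ 2 * (v / ((v - s) * (v - 1))) := by
    filter_upwards [hw] with s hs
    rw [← mul_sub]
    exact mul_nonneg (sq_nonneg _) (sub_nonneg.2 hs.le)
  have hne : ν {s | s ≠ 1} ≠ 0 := fun h ↦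
    hν1 (Measure.eq_dirac_of_ae_eq (ae_iff.2 (by simpa using h)))
  rw [← sub_pos, ← integral_sub (integrable_sq_sub_one_mul_div hB hν hu)
    (integrable_sq_sub_one_mul_div hB hν hv), integral_pos_iff_support_of_nonneg_ae hnonneg hint]
  refine (pos_iff_ne_zero.2 hne).trans_le (measure_mono_ae ?_)
  filter_upwards [hw] with s hs (hs1 : s ≠ 1)
  show (s - 1) ^ 2 * _ - (s - 1) ^ 2 * _ ≠ 0
  rw [← mul_sub]
  exact mul_ne_zero (pow_ne_zero _ (sub_ne_zero.2 hs1)) (sub_ne_zero.2 hs.ne')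

end

/-- Strict monotonicity of the normalized GIC increment function: if `ν` is a Borel
probability measure supported in `[0, B]` (`B ≥ 1`) with mean `1` and `ν` is not the
Dirac measure at `1`, then `g(u) = (u-1) ∫ s/(u-s) dν(s)` is strictly decreasing on
`(B, ∞)`; consequently so is `κ(u) = c g(u)` for every `c > 0`. -/
theorem stmt4 (B : ℝ) (hB : 1 ≤ B) (ν : Measure ℝ) [IsProbabilityMeasure ν]
    (hsupp : ν (Set.Icc (0 : ℝ) B)ᶜ = 0)
    (hmean : (∫ s, s ∂ν) = 1)
    (hnotdirac : ν ≠ MeasureTheory.Measure.dirac (1 : ℝ))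
    (g : ℝ → ℝ) (hg : ∀ u : ℝ, g u = (u - 1) * ∫ s, s / (u - s) ∂ν) :
    StrictAntiOn g (Set.Ioi B) ∧
      ∀ c : ℝ, 0 < c → StrictAntiOn (fun u => c * g u) (Set.Ioi B) := by
  have hν : ∀ᵐ s ∂ν, s ∈ Icc 0 B := ae_iff.2 hsupp
  have hanti : StrictAntiOn g (Ioi B) := fun u hu v hv huv ↦ by
    rw [hg, hg, sub_one_mul_integral_div_sub_eq hB hν hmean hu,
      sub_one_mul_integral_div_sub_eq hB hν hmean hv]
    exact add_lt_add_right (strictAntiOn_integral_sq_sub_one_mul_div hB hν hnotdirac hu hv huv) 1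
  exact ⟨hanti, fun c hc u hu v hv huv ↦ mul_lt_mul_of_pos_left (hanti hu hv huv) hc⟩
end

section
/- Let ν be a Borel probability measure on ℝ whose support is contained in [0, B] for some real B ≥ 1, with mean ∫ s dν(s) = 1. Define g(u) = (u−1)·∫ s/(u−s) dν(s) for u ∈ (B, ∞). Then (i) g(u) ≥ 1 for every u > B, and (ii) lim_{u→∞} g(u) = 1. Consequently, for any c > 0 the function κ(u) = c·g(u) satisfies κ(u) ≥ c for all u > B and κ(u) → c as u → ∞. -/
open MeasureTheory Set Filter

/-! Writing `g(u) = ∫ (u-1) s/(u-s) dν(s)` and `1 = ∫ s dν(s)`, the difference `g(u) - 1` is the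
integral of `s(s-1)/(u-s)`. Since `s(s-1)/(u-s) - (s-1)/(u-1) = u(s-1)²/((u-s)(u-1)) ≥ 0` and
`(s-1)/(u-1)` has mean zero, `g(u) ≥ 1`. On `[0, B]` we have `|s(s-1)/(u-s)| ≤ B(B+1)/(u-B)`,
which tends to `0`, so `g(u) → 1`. -/

noncomputable def normalizedIncrement (ν : Measure ℝ) (u : ℝ) : ℝ :=
  (u - 1) * ∫ s, s / (u - s) ∂ν

lemma integrable_of_continuousOn_of_ae_mem_Icc {ν : Measure ℝ} [IsFiniteMeasure ν] {a b : ℝ}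
    (hsupp : ∀ᵐ s ∂ν, s ∈ Icc a b) {f : ℝ → ℝ} (hf : ContinuousOn f (Icc a b)) :
    Integrable f ν := by
  rw [← Measure.restrict_eq_self_of_ae_mem hsupp]
  exact hf.integrableOn_compact isCompact_Icc

lemma add_div_sub_one_le_mul_div_sub {s u : ℝ} (hs : s < u) (hu : 1 < u) :
    s + (s - 1) / (u - 1) ≤ (u - 1) * s / (u - s) := by
  have hus : 0 < u - s := by linarith
  have hu1 : 0 < u - 1 := by linarith
  rw [add_div' _ _ _ hu1.ne', div_le_div_iff₀ hu1 hus]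
  nlinarith [mul_nonneg (show (0 : ℝ) ≤ u by linarith) (sq_nonneg (s - 1))]

lemma abs_mul_div_sub_sub_le {s u B : ℝ} (hs : s ∈ Icc 0 B) (hu : B < u) :
    |(u - 1) * s / (u - s) - s| ≤ B * (B + 1) / (u - B) := by
  have hus : 0 < u - s := by linarith [hs.2]
  have hdiff : (u - 1) * s / (u - s) - s = s * (s - 1) / (u - s) := by
    field_simp
    ring
  have hB : 0 ≤ B := hs.1.trans hs.2
  have hnum : |s * (s - 1)| ≤ B * (B + 1) := by
    rw [abs_mul, abs_of_nonneg hs.1]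
    exact mul_le_mul hs.2 (abs_le.2 ⟨by linarith [hs.1], by linarith [hs.2]⟩) (abs_nonneg _) hB
  rw [hdiff, abs_div, abs_of_pos hus]
  exact div_le_div₀ (by positivity) hnum (by linarith) (by linarith [hs.2])

lemma normalizedIncrement_eq_integral (ν : Measure ℝ) (u : ℝ) :
    normalizedIncrement ν u = ∫ s, (u - 1) * s / (u - s) ∂ν := by
  simp_rw [normalizedIncrement, ← integral_const_mul, mul_div_assoc]

lemma integrable_mul_div_sub {ν : Measure ℝ} [IsFiniteMeasure ν] {B u : ℝ}
    (hsupp : ∀ᵐ s ∂ν, s ∈ Icc 0 B) (hu : B < u) :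
    Integrable (fun s => (u - 1) * s / (u - s)) ν := by
  have hne : ∀ s ∈ Icc 0 B, u - s ≠ 0 := fun s hs => by linarith [hs.2]
  exact integrable_of_continuousOn_of_ae_mem_Icc hsupp (by fun_prop (disch := exact hne))

section

variable {ν : Measure ℝ} [IsProbabilityMeasure ν] {B : ℝ}

lemma one_le_normalizedIncrement (hsupp : ∀ᵐ s ∂ν, s ∈ Icc 0 B) (hmean : ∫ s, s ∂ν = 1)
    (hB : 1 ≤ B) {u : ℝ} (hu : B < u) : 1 ≤ normalizedIncrement ν u := by
  have hu1 : 1 < u := hB.trans_lt hu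
  have hid : Integrable (fun s => s) ν :=
    integrable_of_continuousOn_of_ae_mem_Icc hsupp continuousOn_id
  have hshift : Integrable (fun s => (s - 1) / (u - 1)) ν :=
    (hid.sub (integrable_const 1)).div_const _
  calc 1 = ∫ s, s + (s - 1) / (u - 1) ∂ν := by
        rw [integral_add hid hshift, integral_div, integral_sub hid (integrable_const 1), hmean]
        simp
    _ ≤ ∫ s, (u - 1) * s / (u - s) ∂ν :=
        integral_mono_ae (hid.add hshift) (integrable_mul_div_sub hsupp hu) <|
          hsupp.mono fun s hs => add_div_sub_one_le_mul_div_sub (by linarith [hs.2]) hu1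
    _ = normalizedIncrement ν u := (normalizedIncrement_eq_integral ν u).symm

lemma tendsto_normalizedIncrement_atTop (hsupp : ∀ᵐ s ∂ν, s ∈ Icc 0 B)
    (hmean : ∫ s, s ∂ν = 1) : Tendsto (normalizedIncrement ν) atTop (nhds 1) := by
  rw [tendsto_iff_norm_sub_tendsto_zero]
  have hbound : Tendsto (fun u => B * (B + 1) / (u - B)) atTop (nhds 0) := by
    simpa only [sub_eq_add_neg, id] using
      tendsto_const_nhds.div_atTop (tendsto_atTop_add_const_right _ (-B) tendsto_id)
  have hid : Integrable (fun s => s) ν :=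
    integrable_of_continuousOn_of_ae_mem_Icc hsupp continuousOn_id
  refine squeeze_zero' (Eventually.of_forall fun _ => norm_nonneg _) ?_ hbound
  filter_upwards [eventually_gt_atTop B] with u hu
  calc ‖normalizedIncrement ν u - 1‖ = ‖∫ s, ((u - 1) * s / (u - s) - s) ∂ν‖ := by
        rw [normalizedIncrement_eq_integral,
          integral_sub (integrable_mul_div_sub hsupp hu) hid, hmean]
    _ ≤ B * (B + 1) / (u - B) * ν.real univ :=
        norm_integral_le_of_norm_le_const (hsupp.mono fun s hs => abs_mul_div_sub_sub_le hs hu)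
    _ = B * (B + 1) / (u - B) := by simp

end

/-- Lower bound and limit of the normalized GIC increment function: if `ν` is a Borel
probability measure supported in `[0, B]` (`B ≥ 1`) with mean `1`, then
`g(u) = (u-1) ∫ s/(u-s) dν(s)` satisfies `g(u) ≥ 1` for all `u > B` and `g(u) → 1` as
`u → ∞`; consequently `κ(u) = c g(u)` satisfies `κ(u) ≥ c` on `(B, ∞)` and `κ(u) → c`. -/
theorem stmt5 (B : ℝ) (hB : 1 ≤ B) (ν : Measure ℝ) [IsProbabilityMeasure ν]
    (hsupp : ν (Set.Icc (0 : ℝ) B)ᶜ = 0)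
    (hmean : (∫ s, s ∂ν) = 1)
    (g : ℝ → ℝ) (hg : ∀ u : ℝ, g u = (u - 1) * ∫ s, s / (u - s) ∂ν) :
    (∀ u : ℝ, B < u → 1 ≤ g u) ∧
    Tendsto g atTop (nhds 1) ∧
    ∀ c : ℝ, 0 < c →
      (∀ u : ℝ, B < u → c ≤ c * g u) ∧
      Tendsto (fun u => c * g u) atTop (nhds c) := by
  obtain rfl : g = normalizedIncrement ν := funext hg
  have hae : ∀ᵐ s ∂ν, s ∈ Icc 0 B := ae_iff.2 hsupp
  have hlower : ∀ u, B < u → 1 ≤ normalizedIncrement ν u := fun u hu =>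
    one_le_normalizedIncrement hae hmean hB hu
  have hlimit := tendsto_normalizedIncrement_atTop hae hmean
  refine ⟨hlower, hlimit, fun c hc => ⟨fun u hu => ?_, ?_⟩⟩
  · exact le_mul_of_one_le_right hc.le (hlower u hu)
  · simpa using hlimit.const_mul c
end

section
/- Let ν be a Borel probability measure on ℝ whose support is contained in [0, B] for some real B ≥ 1, with mean ∫ s dν(s) = 1. Define g(u) = (u−1)·∫ s/(u−s) dν(s) for u ∈ (B, ∞). Then g is differentiable on (B, ∞) with derivative g'(u) = ∫ s(1−s)/(u−s)² dν(s), and g'(u) ≤ 0 for every u > B. -/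
/-!
Both integrands `s / (x - s)` and `-s / (x - s) ^ 2` are bounded uniformly in `s ∈ [0, B]` and
`x` near `u > B`, so the integral may be differentiated under the integral sign. For the sign,
`-g'(u) = ∫ (s - 1) φ(s) dν` with `φ(s) = s / (u - s) ^ 2` increasing on `[0, u)`; since the mean
is `1`, `(s - 1) φ(s) ≥ (s - 1) φ(1)` integrates to `-g'(u) ≥ φ(1) ∫ (s - 1) dν = 0`.
-/

open MeasureTheory Set Filter Topology

section CompactlySupported

variable {X : Type*} [TopologicalSpace X] [T2Space X] [MeasurableSpace X] [OpensMeasurableSpace X]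
  {μ : Measure X} [IsFiniteMeasure μ] {K : Set X}

theorem integrable_of_continuousOn_of_ae_mem (hK : IsCompact K) (hμ : ∀ᵐ x ∂μ, x ∈ K)
    {f : X → ℝ} (hf : ContinuousOn f K) : Integrable f μ := by
  simpa only [IntegrableOn, Measure.restrict_eq_self_of_ae_mem hμ] using
    hf.integrableOn_compact (μ := μ) hK

end CompactlySupported

theorem integral_sub_mul_nonneg_of_monotoneOn {ν : Measure ℝ} [IsProbabilityMeasure ν]
    {S : Set ℝ} {φ : ℝ → ℝ} {m : ℝ} (hν : ∀ᵐ s ∂ν, s ∈ S) (hm : m ∈ S) (hφ : MonotoneOn φ S)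
    (hid : Integrable (fun s ↦ s) ν) (hmean : ∫ s, s ∂ν = m)
    (hint : Integrable (fun s ↦ (s - m) * φ s) ν) :
    0 ≤ ∫ s, (s - m) * φ s ∂ν := by
  have hpointwise : ∀ᵐ s ∂ν, (s - m) * φ m ≤ (s - m) * φ s := by
    filter_upwards [hν] with s hs
    rcases le_total m s with hms | hsm
    · exact mul_le_mul_of_nonneg_left (hφ hm hs hms) (sub_nonneg.2 hms)
    · exact mul_le_mul_of_nonpos_left (hφ hs hm hsm) (sub_nonpos.2 hsm)
  calc (0 : ℝ) = ∫ s, (s - m) * φ m ∂ν := by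
        rw [integral_mul_const, integral_sub hid (integrable_const m), hmean]
        simp
    _ ≤ ∫ s, (s - m) * φ s ∂ν :=
        integral_mono_ae ((hid.sub (integrable_const m)).mul_const _) hint hpointwise

theorem monotoneOn_div_sub_sq (u : ℝ) : MonotoneOn (fun s ↦ s / (u - s) ^ 2) (Ico 0 u) := by
  intro a ha b hb hab
  have hb' : 0 < u - b := sub_pos.2 hb.2
  exact div_le_div₀ (ha.1.trans hab) hab (pow_pos hb' 2)
    (pow_le_pow_left₀ hb'.le (by linarith) 2)

section SupportedInIcc

variable {ν : Measure ℝ} {B u : ℝ}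

theorem norm_neg_div_sub_sq_le {s x δ : ℝ} (hs : s ∈ Icc 0 B) (hδ : 0 < δ) (hx : B + δ < x) :
    ‖-s / (x - s) ^ 2‖ ≤ B / δ ^ 2 := by
  have hxs : δ ≤ x - s := by linarith [hs.2]
  rw [Real.norm_eq_abs, abs_div, abs_neg, abs_of_nonneg hs.1,
    abs_of_pos (pow_pos (hδ.trans_le hxs) 2)]
  exact div_le_div₀ (hs.1.trans hs.2) hs.2 (by positivity) (pow_le_pow_left₀ hδ.le hxs 2)

theorem hasDerivAt_div_sub {s x : ℝ} (hx : x ≠ s) :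
    HasDerivAt (fun y ↦ s / (y - s)) (-s / (x - s) ^ 2) x := by
  simpa [div_eq_mul_inv, neg_div] using
    (((hasDerivAt_id x).sub_const s).inv (sub_ne_zero.2 hx)).const_mul s

section FiniteMeasure

variable [IsFiniteMeasure ν]

theorem integrable_div_sub_pow (hν : ∀ᵐ s ∂ν, s ∈ Icc 0 B) (hu : B < u) {c : ℝ → ℝ}
    (hc : Continuous c) (n : ℕ) : Integrable (fun s ↦ c s / (u - s) ^ n) ν :=
  integrable_of_continuousOn_of_ae_mem isCompact_Icc hν <|
    hc.continuousOn.div (by fun_prop) fun s hs ↦ pow_ne_zero _ (by linarith [hs.2])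

theorem hasDerivAt_integral_div_sub (hν : ∀ᵐ s ∂ν, s ∈ Icc 0 B) (hu : B < u) :
    HasDerivAt (fun x ↦ ∫ s, s / (x - s) ∂ν) (∫ s, -s / (u - s) ^ 2 ∂ν) u := by
  obtain ⟨δ, hδ, hδu⟩ : ∃ δ, 0 < δ ∧ B + δ < u := ⟨(u - B) / 2, by linarith, by linarith⟩
  refine (hasDerivAt_integral_of_dominated_loc_of_deriv_le (F := fun x s ↦ s / (x - s))
    (F' := fun x s ↦ -s / (x - s) ^ 2) (bound := fun _ ↦ B / δ ^ 2) (Ioi_mem_nhds hδu)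
    (Eventually.of_forall fun x ↦ (by fun_prop : Measurable _).aestronglyMeasurable)
    (by simpa using integrable_div_sub_pow hν hu continuous_id 1)
    (by fun_prop : Measurable _).aestronglyMeasurable ?_ (integrable_const _) ?_).2
  · filter_upwards [hν] with s hs x hx
    exact norm_neg_div_sub_sq_le hs hδ hx
  · filter_upwards [hν] with s hs x hx
    exact hasDerivAt_div_sub (by linarith [hs.2, mem_Ioi.1 hx])

theorem hasDerivAt_sub_one_mul_integral_div_sub (hν : ∀ᵐ s ∂ν, s ∈ Icc 0 B) (hu : B < u) :
    HasDerivAt (fun x ↦ (x - 1) * ∫ s, s / (x - s) ∂ν)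
      (∫ s, s * (1 - s) / (u - s) ^ 2 ∂ν) u := by
  refine (((hasDerivAt_id' u).sub_const 1).mul
    (hasDerivAt_integral_div_sub hν hu)).congr_deriv ?_
  rw [one_mul, ← integral_const_mul, ← integral_add
    (by simpa using integrable_div_sub_pow hν hu continuous_id 1)
    ((integrable_div_sub_pow hν hu continuous_neg 2).const_mul _)]
  refine integral_congr_ae ?_
  filter_upwards [hν] with s hs
  have hus : u - s ≠ 0 := sub_ne_zero.2 (by linarith [hs.2])
  field_simp
  ring

end FiniteMeasure

theorem integral_mul_one_sub_div_sub_sq_nonpos [IsProbabilityMeasure ν]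
    (hν : ∀ᵐ s ∂ν, s ∈ Icc 0 B) (hmean : ∫ s, s ∂ν = 1) (hB : 1 ≤ B) (hu : B < u) :
    ∫ s, s * (1 - s) / (u - s) ^ 2 ∂ν ≤ 0 := by
  have hcov : 0 ≤ ∫ s, (s - 1) * (s / (u - s) ^ 2) ∂ν :=
    integral_sub_mul_nonneg_of_monotoneOn (S := Ico 0 u) (m := 1)
      (hν.mono fun s hs ↦ ⟨hs.1, hs.2.trans_lt hu⟩) ⟨zero_le_one, by linarith⟩
      (monotoneOn_div_sub_sq u)
      (integrable_of_continuousOn_of_ae_mem isCompact_Icc hν continuousOn_id) hmean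
      ((integrable_div_sub_pow hν hu (c := fun s ↦ s * (1 - s)) (by fun_prop) 2).neg.congr
        (Eventually.of_forall fun s ↦ by simp only [Pi.neg_apply]; ring))
  calc ∫ s, s * (1 - s) / (u - s) ^ 2 ∂ν = -∫ s, (s - 1) * (s / (u - s) ^ 2) ∂ν := by
        rw [← integral_neg]
        congr 1 with s
        ring
    _ ≤ 0 := neg_nonpos.2 hcov

end SupportedInIcc

/-- Differentiability and derivative sign of the normalized GIC increment function: if
`ν` is a Borel probability measure supported in `[0, B]` (`B ≥ 1`) with mean `1`, then
`g(u) = (u-1) ∫ s/(u-s) dν(s)` is differentiable on `(B, ∞)` with derivative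
`g'(u) = ∫ s(1-s)/(u-s)² dν(s) ≤ 0`. -/
theorem stmt6 (B : ℝ) (hB : 1 ≤ B) (ν : Measure ℝ) [IsProbabilityMeasure ν]
    (hsupp : ν (Set.Icc (0 : ℝ) B)ᶜ = 0)
    (hmean : (∫ s, s ∂ν) = 1)
    (g : ℝ → ℝ) (hg : ∀ u : ℝ, g u = (u - 1) * ∫ s, s / (u - s) ∂ν) :
    ∀ u : ℝ, B < u →
      HasDerivAt g (∫ s, s * (1 - s) / (u - s) ^ 2 ∂ν) u ∧
      (∫ s, s * (1 - s) / (u - s) ^ 2 ∂ν) ≤ 0 := by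
  intro u hu
  have hν : ∀ᵐ s ∂ν, s ∈ Icc 0 B := mem_ae_iff.2 hsupp
  refine ⟨?_, integral_mul_one_sub_div_sub_sq_nonpos hν hmean hB hu⟩
  rw [show g = _ from funext hg]
  exact hasDerivAt_sub_one_mul_integral_div_sub hν hu
end

section
/- Let 0 < c ≤ 1 and σ² > 0, set a = σ²(1−√c)², b = σ²(1+√c)², and let f_{c,σ²}(t) = √((t−a)(b−t))/(2πcσ²t) on [a, b]. For any λ > σ²(1+√c), let ψ = λ(1 + cσ²/(λ−σ²)). Then ψ > b, and c·(ψ/σ² − 1)·∫_a^b t/(ψ − t) · f_{c,σ²}(t) dt = c + c²·(λ/σ²)/((λ/σ²) − 1)². -/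
open Real Set

/-!
The affine substitution `t = (a + b) / 2 + u (b - a) / 2` turns `∫_a^b √((t - a)(b - t)) / (ψ - t) dt`
into `(b - a) / 2 · ∫_{-1}^1 √(1 - u²) / (d - u) du`, which has an elementary primitive and equals
`π (ψ - (a + b) / 2 - √((ψ - a)(ψ - b)))`. The factor `t` of the integrand cancels against the
density's `1 / t`. For the spike limit `ψ = λ(1 + cσ²/(λ - σ²))` both `ψ - a` and `ψ - b` are squares
divided by `λ - σ²`, so the square root is rational in `λ` and the identity becomes algebra.
-/

theorem one_sub_sq_div_sub_eq {d u : ℝ} (hdu : d - u ≠ 0) :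
    1 - ((d * u - 1) / (d - u)) ^ 2 = (d ^ 2 - 1) * (1 - u ^ 2) / (d - u) ^ 2 := by
  field_simp
  ring

theorem sqrt_one_sub_sq_div_sub {d u : ℝ} (hd : 1 ≤ d) (hu : u < d) :
    √(1 - ((d * u - 1) / (d - u)) ^ 2) = √(d ^ 2 - 1) * √(1 - u ^ 2) / (d - u) := by
  rw [one_sub_sq_div_sub_eq (by linarith), sqrt_div' _ (sq_nonneg _),
    sqrt_mul (by nlinarith), sqrt_sq (by linarith)]

/-- The Möbius map `u ↦ (d u - 1) / (d - u)` preserves `[-1, 1]`, and `√(d² - 1)` times its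
`arcsin` has derivative `(d² - 1) / ((d - u) √(1 - u²))`, which combines with the other two terms. -/
theorem hasDerivAt_sqrt_one_sub_sq_div_sub_primitive {d u : ℝ} (hd : 1 < d) (hu : u ∈ Ioo (-1) 1) :
    HasDerivAt (fun u => -√(1 - u ^ 2) + d * arcsin u - √(d ^ 2 - 1) * arcsin ((d * u - 1) / (d - u)))
      (√(1 - u ^ 2) / (d - u)) u := by
  obtain ⟨hu₁, hu₂⟩ := hu
  have h1u : 0 < 1 - u ^ 2 := by nlinarith
  have hdu : 0 < d - u := by linarith
  have hw : 0 < 1 - ((d * u - 1) / (d - u)) ^ 2 := by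
    rw [one_sub_sq_div_sub_eq hdu.ne']
    exact div_pos (mul_pos (by nlinarith) h1u) (by positivity)
  have hsqrt : HasDerivAt (fun u : ℝ => √(1 - u ^ 2)) (-(2 * u) / (2 * √(1 - u ^ 2))) u := by
    simpa using ((hasDerivAt_pow 2 u).const_sub 1).sqrt h1u.ne'
  have hmoeb : HasDerivAt (fun u : ℝ => (d * u - 1) / (d - u)) ((d ^ 2 - 1) / (d - u) ^ 2) u := by
    refine ((((hasDerivAt_id u).const_mul d).sub_const 1).div
      ((hasDerivAt_id u).const_sub d) hdu.ne').congr_deriv ?_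
    simp only [id, mul_one]
    ring
  have harcsin := (hasDerivAt_arcsin (by nlinarith) (by nlinarith)).comp u hmoeb
  refine ((hsqrt.neg.add ((hasDerivAt_arcsin (by linarith) hu₂.ne).const_mul d)).sub
    (harcsin.const_mul √(d ^ 2 - 1))).congr_deriv ?_
  rw [sqrt_one_sub_sq_div_sub hd.le (by linarith)]
  have hS : 0 < √(d ^ 2 - 1) := sqrt_pos.mpr (by nlinarith)
  have hs : 0 < √(1 - u ^ 2) := sqrt_pos.mpr h1u
  field_simp
  linear_combination -sq_sqrt h1u.le

theorem integral_sqrt_one_sub_sq_div_sub {d : ℝ} (hd : 1 < d) :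
    ∫ u in (-1 : ℝ)..1, √(1 - u ^ 2) / (d - u) = π * (d - √(d ^ 2 - 1)) := by
  have hdu : ∀ u ∈ Icc (-1 : ℝ) 1, d - u ≠ 0 := fun u hu => by linarith [hu.2]
  have hcont : ContinuousOn (fun u => √(1 - u ^ 2) / (d - u)) (uIcc (-1) 1) := by
    rw [uIcc_of_le (by norm_num)]
    exact ContinuousOn.div (by fun_prop) (by fun_prop) hdu
  have hprim : ContinuousOn (fun u => -√(1 - u ^ 2) + d * arcsin u
      - √(d ^ 2 - 1) * arcsin ((d * u - 1) / (d - u))) (Icc (-1) 1) :=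
    ContinuousOn.sub (by fun_prop) (continuousOn_const.mul
      (continuous_arcsin.comp_continuousOn (ContinuousOn.div (by fun_prop) (by fun_prop) hdu)))
  rw [intervalIntegral.integral_eq_sub_of_hasDerivAt_of_le (by norm_num) hprim
    (fun u hu => hasDerivAt_sqrt_one_sub_sq_div_sub_primitive hd hu) (hcont.intervalIntegrable)]
  have hright : (d * 1 - 1) / (d - 1) = 1 := by rw [mul_one, div_self (by linarith)]
  have hleft : (d * -1 - 1) / (d - -1) = -1 := by rw [div_eq_iff (by linarith)]; ring
  simp only [hright, hleft, arcsin_one, arcsin_neg_one, one_pow, neg_one_sq, sub_self, sqrt_zero]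
  ring

theorem integral_sqrt_mul_sub_div_sub {a b ψ : ℝ} (hab : a < b) (hψ : b < ψ) :
    ∫ t in a..b, √((t - a) * (b - t)) / (ψ - t)
      = π * (ψ - (a + b) / 2 - √((ψ - a) * (ψ - b))) := by
  set h := (b - a) / 2
  set m := (a + b) / 2
  have hh : 0 < h := by simp only [h]; linarith
  set d := (ψ - m) / h
  have hψm : ψ - m = h * d := by simp only [d]; field_simp
  have hd : 1 < d := by rw [one_lt_div hh]; simp only [h, m]; linarith
  have hsubst := intervalIntegral.integral_comp_mul_add (a := -1) (b := 1)
    (fun t => √((t - a) * (b - t)) / (ψ - t)) hh.ne' m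
  rw [show h * -1 + m = a by simp only [h, m]; ring, show h * 1 + m = b by simp only [h, m]; ring,
    smul_eq_mul, eq_inv_mul_iff_mul_eq₀ hh.ne'] at hsubst
  have hintegrand : ∀ u ∈ uIcc (-1 : ℝ) 1,
      √((h * u + m - a) * (b - (h * u + m))) / (ψ - (h * u + m)) = √(1 - u ^ 2) / (d - u) := by
    intro u _
    rw [show (h * u + m - a) * (b - (h * u + m)) = h ^ 2 * (1 - u ^ 2) by simp only [h, m]; ring,
      show ψ - (h * u + m) = h * (d - u) by linear_combination hψm,
      sqrt_mul (sq_nonneg h), sqrt_sq hh.le, mul_div_mul_left _ _ hh.ne']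
  rw [← hsubst, intervalIntegral.integral_congr hintegrand, integral_sqrt_one_sub_sq_div_sub hd]
  have hroot : h * √(d ^ 2 - 1) = √((ψ - a) * (ψ - b)) := by
    rw [← sqrt_sq hh.le, ← sqrt_mul (sq_nonneg h)]
    congr 1
    linear_combination (-(ψ - m) - h * d) * hψm
  rw [← hroot]
  linear_combination (-π) * hψm

theorem integral_div_sub_mul_div_const_mul (a b ψ K : ℝ) (g : ℝ → ℝ) :
    ∫ t in a..b, t / (ψ - t) * (g t / (K * t)) = K⁻¹ * ∫ t in a..b, g t / (ψ - t) := by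
  rw [← intervalIntegral.integral_const_mul]
  refine intervalIntegral.integral_congr_ae ?_
  filter_upwards [MeasureTheory.Measure.ae_ne MeasureTheory.volume 0] with t ht _
  field_simp

theorem spike_limit_sub_edge {s2 lam : ℝ} (r : ℝ) (hlam : lam - s2 ≠ 0) :
    lam * (1 + r ^ 2 * s2 / (lam - s2)) - s2 * (1 + r) ^ 2 = (lam - s2 * (1 + r)) ^ 2 / (lam - s2) := by
  field_simp
  ring

theorem sqrt_mul_spike_limit_sub_edges {s2 lam r : ℝ} (hs2 : 0 ≤ s2) (hr : 0 ≤ r)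
    (hlam : s2 * (1 + r) < lam) :
    √((lam * (1 + r ^ 2 * s2 / (lam - s2)) - s2 * (1 - r) ^ 2)
        * (lam * (1 + r ^ 2 * s2 / (lam - s2)) - s2 * (1 + r) ^ 2))
      = ((lam - s2) ^ 2 - s2 ^ 2 * r ^ 2) / (lam - s2) := by
  have hls : 0 < lam - s2 := by nlinarith
  have hneg := spike_limit_sub_edge (-r) hls.ne'
  rw [neg_sq, ← sub_eq_add_neg] at hneg
  rw [hneg, spike_limit_sub_edge r hls.ne',
    show (lam - s2 * (1 - r)) ^ 2 / (lam - s2) * ((lam - s2 * (1 + r)) ^ 2 / (lam - s2))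
      = (((lam - s2) ^ 2 - s2 ^ 2 * r ^ 2) / (lam - s2)) ^ 2 by ring]
  have hprod : 0 < (lam - s2 * (1 + r)) * (lam - s2 * (1 - r)) :=
    mul_pos (by linarith) (by nlinarith)
  exact sqrt_sq (div_nonneg (by linarith) hls.le)

theorem stmt10_general (c s2 lam : ℝ) (hc : 0 < c) (hs2 : 0 < s2)
    (hlam : s2 * (1 + Real.sqrt c) < lam)
    (a b ψ : ℝ) (ha : a = s2 * (1 - Real.sqrt c) ^ 2) (hb : b = s2 * (1 + Real.sqrt c) ^ 2)
    (hψ : ψ = lam * (1 + c * s2 / (lam - s2))) :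
    b < ψ ∧
    c * (ψ / s2 - 1) *
        ∫ t in a..b, t / (ψ - t) * (Real.sqrt ((t - a) * (b - t)) / (2 * Real.pi * c * s2 * t))
      = c + c ^ 2 * (lam / s2) / (lam / s2 - 1) ^ 2 := by
  obtain ⟨r, hr, rfl⟩ : ∃ r : ℝ, 0 < r ∧ r ^ 2 = c := ⟨√c, sqrt_pos.mpr hc, sq_sqrt hc.le⟩
  rw [sqrt_sq hr.le] at hlam ha hb
  subst ha hb hψ
  have hls : 0 < lam - s2 := by nlinarith
  have hbψ : s2 * (1 + r) ^ 2 < lam * (1 + r ^ 2 * s2 / (lam - s2)) := by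
    have hgap : 0 < (lam - s2 * (1 + r)) ^ 2 / (lam - s2) := div_pos (by nlinarith) hls
    linarith [spike_limit_sub_edge r hls.ne']
  refine ⟨hbψ, ?_⟩
  rw [integral_div_sub_mul_div_const_mul, integral_sqrt_mul_sub_div_sub (by nlinarith) hbψ,
    sqrt_mul_spike_limit_sub_edges hs2.le hr.le hlam]
  field_simp
  ring

/-- Explicit GIC increment at a distant spike under the simple spiked model: for
`0 < c ≤ 1`, `σ² > 0`, `λ > σ²(1+√c)` and `ψ = λ(1 + cσ²/(λ-σ²))`, one has `ψ > b` and
`c(ψ/σ² - 1) ∫_a^b t/(ψ-t) f_{c,σ²}(t) dt = c + c²(λ/σ²)/((λ/σ²)-1)²`, where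
`f_{c,σ²}(t) = √((t-a)(b-t))/(2πcσ²t)`, `a = σ²(1-√c)²`, `b = σ²(1+√c)²`. -/
theorem stmt10 (c s2 lam : ℝ) (hc : 0 < c) (hc1 : c ≤ 1) (hs2 : 0 < s2)
    (hlam : s2 * (1 + Real.sqrt c) < lam)
    (a b ψ : ℝ) (ha : a = s2 * (1 - Real.sqrt c) ^ 2) (hb : b = s2 * (1 + Real.sqrt c) ^ 2)
    (hψ : ψ = lam * (1 + c * s2 / (lam - s2))) :
    b < ψ ∧
    c * (ψ / s2 - 1) *
        ∫ t in a..b, t / (ψ - t) * (Real.sqrt ((t - a) * (b - t)) / (2 * Real.pi * c * s2 * t))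
      = c + c ^ 2 * (lam / s2) / (lam / s2 - 1) ^ 2 :=
  stmt10_general c s2 lam hc hs2 hlam a b ψ ha hb hψ
end

section
/- Let p ≥ 2 and 1 ≤ r ≤ p−1 be integers, and let S be a p×p real symmetric positive-definite matrix with eigenvalues ℓ_1 > ℓ_2 > ⋯ > ℓ_p > 0 (all distinct) and corresponding orthonormal eigenvectors v_1, …, v_p. Assume ℓ_r > σ̂² where σ̂² = (1/(p−r))∑_{j=r+1}^p ℓ_j. Consider the set C of all p×p matrices of the form Σ = ΓΛΓᵀ + σ²(I_p − ΓΓᵀ), where Γ is a p×r real matrix with ΓᵀΓ = I_r, Λ = diag(λ_1, …, λ_r) with λ_1 > λ_2 > ⋯ > λ_r > σ² > 0. Then for every Σ ∈ C, ln det Σ + tr(S Σ⁻¹) ≥ ∑_{j=1}^r ln ℓ_j + (p−r) ln σ̂² + p, and equality is attained at Σ̂_r = ∑_{j=1}^r ℓ_j v_j v_jᵀ + σ̂² (I_p − ∑_{j=1}^r v_j v_jᵀ) ∈ C. Equivalently, Σ̂_r maximizes the Gaussian log-likelihood −(1/2)ln|Σ| − (1/2)tr(S Σ⁻¹) over the rank-r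 simple spiked working model. -/
/-!
For `Σ = ΓΛΓᵀ + t(I - ΓΓᵀ)` with `ΓᵀΓ = I` one has `Σ⁻¹ = ΓΛ⁻¹Γᵀ + t⁻¹(I - ΓΓᵀ)` and
`det Σ = t^(p-r) ∏ λᵢ`, so with `qᵢ = γᵢᵀ S γᵢ`
`ln det Σ + tr(SΣ⁻¹) = ∑ᵢ (ln λᵢ + qᵢ/λᵢ) + (p-r) ln t + (tr S - ∑ᵢ qᵢ)/t`.
The matrix `Γ` enters only through `-∑ᵢ (t⁻¹ - λᵢ⁻¹) qᵢ`, whose weights are nonnegative and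
decreasing. By Ky Fan's maximum principle `q₁ + ⋯ + q_k ≤ ℓ₁ + ⋯ + ℓ_k` (the weights
`wⱼ = ∑_{i≤k} (vⱼ·γᵢ)²` lie in `[0,1]` and sum to `k`), so Abel summation allows replacing each
`qᵢ` by `ℓᵢ`. What is left splits into terms `ln x + a/x ≥ ln a + 1`, with equality at `x = a`,
which is attained by `Σ̂_r`.
-/

open Matrix Finset

theorem log_add_one_le_log_add_div {a x : ℝ} (ha : 0 < a) (hx : 0 < x) :
    Real.log a + 1 ≤ Real.log x + a / x := by
  have h := Real.log_le_sub_one_of_pos (div_pos ha hx)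
  rw [Real.log_div ha.ne' hx.ne'] at h
  linarith

theorem sum_mul_le_sum_of_sum_eq_card {ι : Type*} [Fintype ι] [DecidableEq ι]
    (ℓ w : ι → ℝ) (s : Finset ι) (θ : ℝ)
    (hs : ∀ j ∈ s, θ ≤ ℓ j) (hsc : ∀ j ∉ s, ℓ j ≤ θ)
    (hw₀ : ∀ j, 0 ≤ w j) (hw₁ : ∀ j, w j ≤ 1) (hw : ∑ j, w j = #s) :
    ∑ j, ℓ j * w j ≤ ∑ j ∈ s, ℓ j := by
  have hterm : ∀ j, (ℓ j - θ) * (w j - if j ∈ s then 1 else 0) ≤ 0 := by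
    intro j
    by_cases hj : j ∈ s
    · simpa [hj] using
        mul_nonpos_of_nonneg_of_nonpos (sub_nonneg.2 (hs j hj)) (sub_nonpos.2 (hw₁ j))
    · simpa [hj] using mul_nonpos_of_nonpos_of_nonneg (sub_nonpos.2 (hsc j hj)) (hw₀ j)
  have hsplit : ∑ j, ℓ j * w j - ∑ j ∈ s, ℓ j
      = ∑ j, (ℓ j - θ) * (w j - if j ∈ s then 1 else 0) + θ * (∑ j, w j - #s) := by
    simp only [mul_sub, sub_mul, sum_sub_distrib, mul_ite, mul_one, mul_zero, sum_ite_mem,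
      univ_inter, mul_sum, sum_const, nsmul_eq_mul]
    ring
  rw [hw, sub_self, mul_zero, add_zero] at hsplit
  linarith [sum_nonpos (s := univ) fun j _ => hterm j]

theorem sum_mul_le_sum_mul_of_antitone {n : ℕ} (c a b : Fin n → ℝ) (hc : Antitone c)
    (hc₀ : ∀ i, 0 ≤ c i)
    (hab : ∀ k (hk : k ≤ n), ∑ i : Fin k, a (i.castLE hk) ≤ ∑ i : Fin k, b (i.castLE hk)) :
    ∑ i, c i * a i ≤ ∑ i, c i * b i := by
  induction n with
  | zero => simp
  | succ n ih =>
    -- split `c` as `c (last n)` plus `c - c (last n)`, which vanishes at `last n`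
    have hrest := ih (fun i => c i.castSucc - c (Fin.last n)) (a ∘ Fin.castSucc)
      (b ∘ Fin.castSucc) (fun i j hij => by simpa using hc (Fin.castSucc_le_castSucc_iff.2 hij))
      (fun i => sub_nonneg.2 (hc (Fin.le_last i.castSucc)))
      (fun k hk => by simpa using hab k (hk.trans n.le_succ))
    have hall := mul_le_mul_of_nonneg_left (hab (n + 1) le_rfl) (hc₀ (Fin.last n))
    simp only [Fin.castLE_rfl, id, Fin.sum_univ_castSucc, Function.comp, sub_mul,
      sum_sub_distrib, ← mul_sum, mul_add] at hrest hall ⊢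
    linarith

theorem sum_log_add_le_of_weighted_sum_le {κ : Type*} [Fintype κ] {ℓ μ q : κ → ℝ}
    {t σ m T : ℝ} (hℓ : ∀ i, 0 < ℓ i) (hμ : ∀ i, 0 < μ i) (ht : 0 < t) (hσ : 0 < σ)
    (hm : 0 ≤ m) (hT : T = ∑ i, ℓ i + m * σ)
    (hq : ∑ i, (t⁻¹ - (μ i)⁻¹) * q i ≤ ∑ i, (t⁻¹ - (μ i)⁻¹) * ℓ i) :
    ∑ i, Real.log (ℓ i) + m * Real.log σ + (Fintype.card κ + m)
      ≤ ∑ i, (Real.log (μ i) + q i / μ i) + m * Real.log t + (T - ∑ i, q i) / t := by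
  have hsplit : ∀ x : κ → ℝ, ∑ i, (Real.log (μ i) + x i / μ i) - (∑ i, x i) / t
      = ∑ i, Real.log (μ i) - ∑ i, (t⁻¹ - (μ i)⁻¹) * x i := by
    intro x
    calc ∑ i, (Real.log (μ i) + x i / μ i) - (∑ i, x i) / t
        = ∑ i, (Real.log (μ i) + x i / μ i - x i / t) := by rw [sum_div, sum_sub_distrib]
      _ = ∑ i, (Real.log (μ i) - (t⁻¹ - (μ i)⁻¹) * x i) := sum_congr rfl fun i _ => by ring
      _ = _ := sum_sub_distrib _ _
  have hℓμ : ∑ i, (Real.log (ℓ i) + 1) ≤ ∑ i, (Real.log (μ i) + ℓ i / μ i) :=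
    sum_le_sum fun i _ => log_add_one_le_log_add_div (hℓ i) (hμ i)
  have hσt : m * (Real.log σ + 1) ≤ m * (Real.log t + σ / t) :=
    mul_le_mul_of_nonneg_left (log_add_one_le_log_add_div hσ ht) hm
  have hcard : ∑ i, (Real.log (ℓ i) + 1) = ∑ i, Real.log (ℓ i) + Fintype.card κ := by
    simp [sum_add_distrib]
  have hTt : (T - ∑ i, q i) / t = (∑ i, ℓ i) / t + m * (σ / t) - (∑ i, q i) / t := by
    rw [hT]; ring
  linarith [hsplit q, hsplit ℓ]

theorem sum_filter_val_lt_eq_sum_castLE {M : Type*} [AddCommMonoid M] {k n : ℕ} (h : k ≤ n)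
    (f : Fin n → M) :
    ∑ j ∈ univ.filter (fun j : Fin n => (j : ℕ) < k), f j = ∑ i : Fin k, f (i.castLE h) := by
  have hmap : univ.filter (fun j : Fin n => (j : ℕ) < k) = univ.map (Fin.castLEEmb h) := by
    ext j
    simp only [mem_filter, mem_univ, true_and, mem_map, Fin.castLEEmb_apply]
    exact ⟨fun hj => ⟨⟨j, hj⟩, rfl⟩, fun ⟨i, hi⟩ => hi ▸ i.isLt⟩
  rw [hmap, sum_map]
  rfl

theorem sum_eq_sum_castLE_add_mul_of_eq_tail_avg {p r : ℕ} (hrp : r < p) (ev : Fin p → ℝ)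
    {σ : ℝ}
    (hσ : σ = (1 / ((p : ℝ) - r)) * ∑ j ∈ univ.filter (fun j : Fin p => r ≤ (j : ℕ)), ev j) :
    ∑ j, ev j = ∑ i : Fin r, ev (i.castLE hrp.le) + ((p : ℝ) - r) * σ := by
  have hpr : (p : ℝ) - r ≠ 0 := sub_ne_zero.2 (Nat.cast_injective.ne hrp.ne')
  rw [hσ, one_div, mul_inv_cancel_left₀ hpr, ← sum_filter_val_lt_eq_sum_castLE,
    ← sum_filter_add_sum_filter_not univ (fun j : Fin p => (j : ℕ) < r)]
  simp only [not_lt]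

theorem tail_avg_pos {p r : ℕ} (hrp : r < p) {ev : Fin p → ℝ} (hpos : ∀ j, 0 < ev j) :
    0 < (1 / ((p : ℝ) - r)) * ∑ j ∈ univ.filter (fun j : Fin p => r ≤ (j : ℕ)), ev j :=
  mul_pos (one_div_pos.2 (sub_pos.2 (Nat.cast_lt.2 hrp)))
    (sum_pos (fun j _ => hpos j) ⟨⟨p - 1, by omega⟩, by simp; omega⟩)

section OrthonormalColumns

variable {ι κ : Type*} [Fintype ι] [DecidableEq κ] {B : Matrix ι κ ℝ}

theorem sum_sq_col_eq_one (hB : Bᵀ * B = 1) (i : κ) : ∑ j, B j i ^ 2 = 1 := by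
  simpa [mul_apply, sq] using congrFun (congrFun hB i) i

theorem sum_sq_row_le_one [Fintype κ] (hB : Bᵀ * B = 1) (j : ι) : ∑ i, B j i ^ 2 ≤ 1 := by
  set P := B * Bᵀ
  have hP : Pᵀ * P = P := by
    simp only [P, transpose_mul, transpose_transpose, Matrix.mul_assoc]
    rw [← Matrix.mul_assoc Bᵀ, hB, Matrix.one_mul]
  -- `P` is an orthogonal projection, so `P j j = ‖P eⱼ‖² ≥ (P j j)²`
  have hdiag : P j j = ∑ i, B j i ^ 2 := by simp [P, mul_apply, sq]
  have hsq : P j j ^ 2 ≤ P j j := by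
    calc P j j ^ 2 ≤ ∑ m, P m j ^ 2 :=
          single_le_sum (f := fun m => P m j ^ 2) (fun m _ => sq_nonneg _) (mem_univ j)
      _ = P j j := by simpa [mul_apply, sq] using (congrFun (congrFun hP j) j)
  nlinarith [hdiag ▸ sum_nonneg fun i (_ : i ∈ univ) => sq_nonneg (B j i)]

end OrthonormalColumns

theorem transpose_mul_diagonal_mul_eq_sum {ι κ : Type*} [Fintype κ] [DecidableEq κ]
    (A : Matrix κ ι ℝ) (d : κ → ℝ) :
    Aᵀ * diagonal d * A = ∑ j, d j • vecMulVec (A j) (A j) := by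
  ext a b
  simp [mul_apply, Matrix.sum_apply, vecMulVec_apply, diagonal, mul_comm, mul_left_comm]

theorem transpose_mul_eq_sum_vecMulVec {ι κ : Type*} [Fintype κ] [DecidableEq κ]
    (A : Matrix κ ι ℝ) : Aᵀ * A = ∑ j, vecMulVec (A j) (A j) := by
  simpa using transpose_mul_diagonal_mul_eq_sum A 1

theorem trace_transpose_mul_diagonal_mul {ι : Type*} [Fintype ι] [DecidableEq ι]
    {V : Matrix ι ι ℝ} (hV : V * Vᵀ = 1) (d : ι → ℝ) :
    trace (Vᵀ * diagonal d * V) = ∑ j, d j := by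
  rw [trace_mul_comm, ← Matrix.mul_assoc, hV, Matrix.one_mul, trace_diagonal]

theorem trace_transpose_mul_diagonal_mul_le {p k : ℕ} {ev : Fin p → ℝ} (hev : Antitone ev)
    (hk : k < p) {B : Matrix (Fin p) (Fin k) ℝ} (hB : Bᵀ * B = 1) :
    trace (Bᵀ * diagonal ev * B) ≤ ∑ i : Fin k, ev (i.castLE hk.le) := by
  have htrace : trace (Bᵀ * diagonal ev * B) = ∑ j, ev j * ∑ i, B j i ^ 2 := by
    simp only [trace, Matrix.diag, mul_apply, diagonal_apply, mul_ite, mul_zero, sum_ite_eq',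
      mem_univ, if_true, transpose_apply, mul_sum]
    rw [sum_comm]
    exact sum_congr rfl fun j _ => sum_congr rfl fun i _ => by ring
  rw [htrace, ← sum_filter_val_lt_eq_sum_castLE hk.le]
  refine sum_mul_le_sum_of_sum_eq_card ev _ _ (ev ⟨k, hk⟩) ?_ ?_ (fun j => by positivity)
    (sum_sq_row_le_one hB) ?_
  · intro j hj
    exact hev (show j ≤ ⟨k, hk⟩ from Fin.le_def.2 (by simp at hj ⊢; omega))
  · intro j hj
    exact hev (show ⟨k, hk⟩ ≤ j from Fin.le_def.2 (by simp at hj ⊢; omega))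
  · rw [sum_comm, Fin.card_filter_val_lt, min_eq_right hk.le]
    simp [sum_sq_col_eq_one hB]

section SpikedCov

variable {ι κ : Type*} [Fintype ι] [Fintype κ] [DecidableEq ι] [DecidableEq κ]

def spikedCov (Γ : Matrix ι κ ℝ) (μ : κ → ℝ) (t : ℝ) : Matrix ι ι ℝ :=
  Γ * diagonal μ * Γᵀ + t • (1 - Γ * Γᵀ)

theorem trace_mul_spikedCov (S : Matrix ι ι ℝ) (Γ : Matrix ι κ ℝ) (μ : κ → ℝ) (t : ℝ) :
    trace (S * spikedCov Γ μ t)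
      = ∑ i, (Γᵀ * S * Γ) i i * μ i + t * (trace S - ∑ i, (Γᵀ * S * Γ) i i) := by
  have hΓSΓ : trace (S * (Γ * Γᵀ)) = ∑ i, (Γᵀ * S * Γ) i i := by
    rw [← Matrix.mul_assoc, trace_mul_comm, ← Matrix.mul_assoc]; rfl
  have hΓSDΓ : trace (S * (Γ * diagonal μ * Γᵀ)) = ∑ i, (Γᵀ * S * Γ) i i * μ i := by
    rw [← Matrix.mul_assoc, trace_mul_comm, ← Matrix.mul_assoc, ← Matrix.mul_assoc]
    simp [trace, mul_diagonal]
  rw [spikedCov, Matrix.mul_add, trace_add, Matrix.mul_smul, trace_smul, Matrix.mul_sub,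
    Matrix.mul_one, trace_sub, hΓSΓ, hΓSDΓ, smul_eq_mul]

variable {Γ : Matrix ι κ ℝ} (hΓ : Γᵀ * Γ = 1) {μ : κ → ℝ} {t : ℝ}
include hΓ

theorem spikedCov_mul_spikedCov_inv (hμ : ∀ i, μ i ≠ 0) (ht : t ≠ 0) :
    spikedCov Γ μ t * spikedCov Γ μ⁻¹ t⁻¹ = 1 := by
  rw [spikedCov, spikedCov]
  set Q : Matrix ι ι ℝ := 1 - Γ * Γᵀ with hQ
  have hΓQ : Γᵀ * Q = 0 := by simp [Q, Matrix.mul_sub, ← Matrix.mul_assoc, hΓ]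
  have hQΓ : Q * Γ = 0 := by simp [Q, Matrix.sub_mul, Matrix.mul_assoc, hΓ]
  have hQQ : Q * Q = Q := by
    rw [hQ, Matrix.sub_mul, Matrix.one_mul, Matrix.mul_assoc, ← hQ, hΓQ, Matrix.mul_zero,
      sub_zero]
  have hμμ : diagonal μ * diagonal μ⁻¹ = 1 := by
    rw [diagonal_mul_diagonal, ← diagonal_one]
    exact congrArg diagonal (funext fun i => mul_inv_cancel₀ (hμ i))
  calc (Γ * diagonal μ * Γᵀ + t • Q) * (Γ * diagonal μ⁻¹ * Γᵀ + t⁻¹ • Q)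
      = Γ * (diagonal μ * (Γᵀ * Γ) * diagonal μ⁻¹) * Γᵀ + t⁻¹ • (Γ * diagonal μ * (Γᵀ * Q))
          + t • (Q * Γ * diagonal μ⁻¹ * Γᵀ) + (t⁻¹ * t) • (Q * Q) := by
        simp only [Matrix.add_mul, Matrix.mul_add, Matrix.smul_mul, Matrix.mul_smul, smul_add,
          smul_smul, Matrix.mul_assoc]
        abel
    _ = Γ * Γᵀ + Q := by simp [hΓ, hΓQ, hQΓ, hQQ, hμμ, ht]
    _ = 1 := add_sub_cancel _ _

theorem det_spikedCov (ht : t ≠ 0) :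
    (spikedCov Γ μ t).det = t ^ Fintype.card ι * ∏ i, μ i / t := by
  have hfactor : spikedCov Γ μ t = t • (1 + (t⁻¹ • (Γ * (diagonal μ - t • 1))) * Γᵀ) := by
    simp only [spikedCov, Matrix.mul_sub, Matrix.sub_mul, Matrix.smul_mul, smul_add, smul_smul,
      mul_inv_cancel₀ ht, one_smul, smul_sub, Matrix.mul_one, Matrix.mul_smul, Matrix.mul_assoc]
    match_scalars <;> field_simp
  have hdiag : (1 : Matrix κ κ ℝ) + Γᵀ * (t⁻¹ • (Γ * (diagonal μ - t • 1))) =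
      diagonal fun i => μ i / t := by
    rw [Matrix.mul_smul, ← Matrix.mul_assoc, hΓ, Matrix.one_mul]
    ext i j
    by_cases h : i = j
    · subst h; simp; field_simp; ring
    · simp [h]
  rw [hfactor, det_smul, det_one_add_mul_comm, hdiag, det_diagonal]

theorem log_det_spikedCov (hμ : ∀ i, 0 < μ i) (ht : 0 < t) :
    Real.log (spikedCov Γ μ t).det
      = ∑ i, Real.log (μ i) + ((Fintype.card ι : ℝ) - Fintype.card κ) * Real.log t := by
  have hμt : ∀ i, μ i / t ≠ 0 := fun i => (div_pos (hμ i) ht).ne'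
  rw [det_spikedCov hΓ ht.ne',
    Real.log_mul (pow_ne_zero _ ht.ne') (prod_ne_zero_iff.2 fun i _ => hμt i),
    Real.log_pow, Real.log_prod fun i _ => hμt i]
  simp only [Real.log_div (hμ _).ne' ht.ne', sum_sub_distrib, sum_const, card_univ, nsmul_eq_mul]
  ring

theorem log_det_add_trace_mul_inv_spikedCov (S : Matrix ι ι ℝ) (hμ : ∀ i, 0 < μ i)
    (ht : 0 < t) :
    Real.log (spikedCov Γ μ t).det + trace (S * (spikedCov Γ μ t)⁻¹)
      = ∑ i, (Real.log (μ i) + (Γᵀ * S * Γ) i i / μ i)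
        + ((Fintype.card ι : ℝ) - Fintype.card κ) * Real.log t
        + (trace S - ∑ i, (Γᵀ * S * Γ) i i) / t := by
  rw [inv_eq_right_inv (spikedCov_mul_spikedCov_inv hΓ (fun i => (hμ i).ne') ht.ne'),
    trace_mul_spikedCov, log_det_spikedCov hΓ hμ ht]
  simp only [sum_add_distrib, div_eq_mul_inv, Pi.inv_apply]
  ring

end SpikedCov

section Eigenbasis

variable {p r : ℕ} {ev : Fin p → ℝ} {V S : Matrix (Fin p) (Fin p) ℝ}

theorem sum_diag_castLE_le (hS : S = Vᵀ * diagonal ev * V) (hV : V * Vᵀ = 1)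
    (hev : Antitone ev) (hrp : r < p) {Γ : Matrix (Fin p) (Fin r) ℝ} (hΓ : Γᵀ * Γ = 1)
    {k : ℕ} (hk : k ≤ r) :
    ∑ i : Fin k, (Γᵀ * S * Γ) (i.castLE hk) (i.castLE hk)
      ≤ ∑ i : Fin k, ev ((i.castLE hk).castLE hrp.le) := by
  set Γ' := Γ.submatrix id (Fin.castLE hk)
  have hsub : ∀ X : Matrix (Fin p) (Fin p) ℝ,
      Γ'ᵀ * X * Γ' = (Γᵀ * X * Γ).submatrix (Fin.castLE hk) (Fin.castLE hk) := by
    intro X; ext i j; simp [Γ', mul_apply]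
  have hB : (V * Γ')ᵀ * (V * Γ') = 1 := by
    rw [transpose_mul, Matrix.mul_assoc, ← Matrix.mul_assoc Vᵀ, mul_eq_one_comm.mp hV,
      Matrix.one_mul]
    simpa [hΓ, submatrix_one _ (Fin.castLE_injective hk)] using hsub 1
  calc ∑ i : Fin k, (Γᵀ * S * Γ) (i.castLE hk) (i.castLE hk)
      = trace (Γ'ᵀ * S * Γ') := by rw [hsub]; rfl
    _ = trace ((V * Γ')ᵀ * diagonal ev * (V * Γ')) := by
        rw [hS]; simp only [transpose_mul, Matrix.mul_assoc]
    _ ≤ ∑ i : Fin k, ev ((i.castLE hk).castLE hrp.le) :=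
        trace_transpose_mul_diagonal_mul_le hev (hk.trans_lt hrp) hB

theorem log_det_add_trace_mul_inv_spikedCov_ge (hS : S = Vᵀ * diagonal ev * V)
    (hV : V * Vᵀ = 1) (hev : Antitone ev) (hpos : ∀ j, 0 < ev j) (hrp : r < p) {σ : ℝ}
    (hσ : 0 < σ) (htr : trace S = ∑ i : Fin r, ev (i.castLE hrp.le) + ((p : ℝ) - r) * σ)
    {Γ : Matrix (Fin p) (Fin r) ℝ} (hΓ : Γᵀ * Γ = 1) {μ : Fin r → ℝ} (hμ : StrictAnti μ)
    {t : ℝ} (htμ : ∀ i, t < μ i) (ht : 0 < t) :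
    ∑ i : Fin r, Real.log (ev (i.castLE hrp.le)) + ((p : ℝ) - r) * Real.log σ + p
      ≤ Real.log (spikedCov Γ μ t).det + trace (S * (spikedCov Γ μ t)⁻¹) := by
  have hμpos : ∀ i, 0 < μ i := fun i => ht.trans (htμ i)
  have hweights := sum_mul_le_sum_mul_of_antitone (fun i => t⁻¹ - (μ i)⁻¹)
    (fun i => (Γᵀ * S * Γ) i i) (fun i => ev (i.castLE hrp.le))
    (fun i j hij => sub_le_sub_left (inv_anti₀ (hμpos j) (hμ.antitone hij)) _)
    (fun i => sub_nonneg.2 (inv_anti₀ ht (htμ i).le))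
    (fun k hk => sum_diag_castLE_le hS hV hev hrp hΓ hk)
  rw [log_det_add_trace_mul_inv_spikedCov hΓ S hμpos ht, Fintype.card_fin, Fintype.card_fin]
  have hbound := sum_log_add_le_of_weighted_sum_le (fun i => hpos _) hμpos ht hσ
    (sub_nonneg.2 (Nat.cast_le.2 hrp.le)) htr hweights
  rwa [Fintype.card_fin, add_sub_cancel] at hbound

def topEigenvectors (V : Matrix (Fin p) (Fin p) ℝ) (h : r ≤ p) : Matrix (Fin p) (Fin r) ℝ :=
  (V.submatrix (Fin.castLE h) id)ᵀ

theorem topEigenvectors_transpose_mul (hV : V * Vᵀ = 1) (h : r ≤ p) :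
    (topEigenvectors V h)ᵀ * topEigenvectors V h = 1 := by
  ext i j
  simpa [topEigenvectors, mul_apply, one_apply, (Fin.castLE_injective h).eq_iff] using
    congrFun (congrFun hV (i.castLE h)) (j.castLE h)

theorem diag_topEigenvectors (hS : S = Vᵀ * diagonal ev * V) (hV : V * Vᵀ = 1) (h : r ≤ p)
    (i : Fin r) :
    ((topEigenvectors V h)ᵀ * S * topEigenvectors V h) i i = ev (i.castLE h) := by
  have hcols : V * topEigenvectors V h
      = (1 : Matrix (Fin p) (Fin p) ℝ).submatrix id (Fin.castLE h) := by
    rw [topEigenvectors, ← hV]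
    ext a b; simp [mul_apply]
  have hrows : (topEigenvectors V h)ᵀ * Vᵀ
      = (1 : Matrix (Fin p) (Fin p) ℝ).submatrix (Fin.castLE h) id := by
    rw [← transpose_mul, hcols, transpose_submatrix, transpose_one]
  rw [hS, ← Matrix.mul_assoc, ← Matrix.mul_assoc, hrows, Matrix.mul_assoc, hcols]
  simp [mul_apply, diagonal_apply, one_apply]

theorem log_det_add_trace_mul_inv_spikedCov_top (hS : S = Vᵀ * diagonal ev * V)
    (hV : V * Vᵀ = 1) (hpos : ∀ j, 0 < ev j) (hrp : r < p) {σ : ℝ} (hσ : 0 < σ)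
    (htr : trace S = ∑ i : Fin r, ev (i.castLE hrp.le) + ((p : ℝ) - r) * σ) :
    Real.log (spikedCov (topEigenvectors V hrp.le) (fun i => ev (i.castLE hrp.le)) σ).det
        + trace (S * (spikedCov (topEigenvectors V hrp.le) (fun i => ev (i.castLE hrp.le)) σ)⁻¹)
      = ∑ i : Fin r, Real.log (ev (i.castLE hrp.le)) + ((p : ℝ) - r) * Real.log σ + p := by
  rw [log_det_add_trace_mul_inv_spikedCov (topEigenvectors_transpose_mul hV _) S
    (fun i => hpos _) hσ, Fintype.card_fin, Fintype.card_fin]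
  simp only [diag_topEigenvectors hS hV, htr, div_self (hpos _).ne', sum_add_distrib, sum_const,
    card_univ, Fintype.card_fin, nsmul_eq_mul, mul_one, add_sub_cancel_left]
  field_simp
  ring

end Eigenbasis

theorem stmt12_general (p r : ℕ) (hp : 2 ≤ p) (hrp : r ≤ p - 1)
    (ev : Fin p → ℝ) (v : Fin p → Fin p → ℝ)
    (hdec : ∀ i j : Fin p, i < j → ev j < ev i)
    (hpos : ∀ j : Fin p, 0 < ev j)
    (horth : ∀ i j : Fin p, v i ⬝ᵥ v j = if i = j then (1 : ℝ) else 0)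
    (S : Matrix (Fin p) (Fin p) ℝ)
    (hS : S = ∑ j : Fin p, ev j • Matrix.vecMulVec (v j) (v j))
    (σhat : ℝ)
    (hσhat : σhat = (1 / ((p : ℝ) - (r : ℝ))) *
      ∑ j ∈ Finset.univ.filter (fun j : Fin p => r ≤ (j : ℕ)), ev j)
    (hgap : ∀ j : Fin p, (j : ℕ) < r → σhat < ev j)
    (Sig : Matrix (Fin p) (Fin p) ℝ)
    (hSig : Sig = (∑ j ∈ Finset.univ.filter (fun j : Fin p => (j : ℕ) < r),
        ev j • Matrix.vecMulVec (v j) (v j)) +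
      σhat • ((1 : Matrix (Fin p) (Fin p) ℝ) -
        ∑ j ∈ Finset.univ.filter (fun j : Fin p => (j : ℕ) < r),
          Matrix.vecMulVec (v j) (v j))) :
    (∀ (Γ : Matrix (Fin p) (Fin r) ℝ) (μ : Fin r → ℝ) (t2 : ℝ),
      Γᵀ * Γ = 1 → (∀ i j : Fin r, i < j → μ j < μ i) → (∀ i : Fin r, t2 < μ i) → 0 < t2 →
      Real.log (Γ * Matrix.diagonal μ * Γᵀ
            + t2 • ((1 : Matrix (Fin p) (Fin p) ℝ) - Γ * Γᵀ)).det
          + Matrix.trace (S * (Γ * Matrix.diagonal μ * Γᵀ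
            + t2 • ((1 : Matrix (Fin p) (Fin p) ℝ) - Γ * Γᵀ))⁻¹)
        ≥ (∑ j ∈ Finset.univ.filter (fun j : Fin p => (j : ℕ) < r), Real.log (ev j))
          + ((p : ℝ) - (r : ℝ)) * Real.log σhat + (p : ℝ)) ∧
    (Real.log Sig.det + Matrix.trace (S * Sig⁻¹)
      = (∑ j ∈ Finset.univ.filter (fun j : Fin p => (j : ℕ) < r), Real.log (ev j))
        + ((p : ℝ) - (r : ℝ)) * Real.log σhat + (p : ℝ)) ∧
    (∃ (Γ : Matrix (Fin p) (Fin r) ℝ) (μ : Fin r → ℝ) (t2 : ℝ),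
      Γᵀ * Γ = 1 ∧ (∀ i j : Fin r, i < j → μ j < μ i) ∧ (∀ i : Fin r, t2 < μ i) ∧ 0 < t2 ∧
      Sig = Γ * Matrix.diagonal μ * Γᵀ
        + t2 • ((1 : Matrix (Fin p) (Fin p) ℝ) - Γ * Γᵀ)) := by
  have hrp' : r < p := by omega
  set V : Matrix (Fin p) (Fin p) ℝ := Matrix.of v
  have hV : V * Vᵀ = 1 := by
    ext i j; simpa [V, mul_apply, one_apply, dotProduct] using horth i j
  have hS' : S = Vᵀ * diagonal ev * V := by rw [hS, transpose_mul_diagonal_mul_eq_sum]; rfl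
  have htr : trace S = ∑ i : Fin r, ev (i.castLE hrp'.le) + ((p : ℝ) - r) * σhat := by
    rw [hS', trace_transpose_mul_diagonal_mul hV]
    exact sum_eq_sum_castLE_add_mul_of_eq_tail_avg hrp' ev hσhat
  have hσ : 0 < σhat := hσhat ▸ tail_avg_pos hrp' hpos
  have hSig' :
      Sig = spikedCov (topEigenvectors V hrp'.le) (fun i => ev (i.castLE hrp'.le)) σhat := by
    rw [hSig, sum_filter_val_lt_eq_sum_castLE hrp'.le, sum_filter_val_lt_eq_sum_castLE hrp'.le,
      spikedCov, topEigenvectors, transpose_transpose, transpose_mul_diagonal_mul_eq_sum,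
      transpose_mul_eq_sum_vecMulVec]
    rfl
  rw [sum_filter_val_lt_eq_sum_castLE hrp'.le]
  refine ⟨fun Γ μ t hΓ hμ htμ ht => ?_, ?_, ⟨_, _, σhat, topEigenvectors_transpose_mul hV hrp'.le,
    fun i j hij => hdec _ _ hij, fun i => hgap _ i.isLt, hσ, hSig'⟩⟩
  · exact log_det_add_trace_mul_inv_spikedCov_ge hS' hV (StrictAnti.antitone hdec) hpos hrp' hσ
      htr hΓ hμ htμ ht
  · rw [hSig']
    exact log_det_add_trace_mul_inv_spikedCov_top hS' hV hpos hrp' hσ htr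

/-- MLE of the rank-`r` simple spiked working model: over all covariances
`Σ = ΓΛΓᵀ + σ²(I - ΓΓᵀ)` with `ΓᵀΓ = I_r` and `λ_1 > ⋯ > λ_r > σ² > 0`, the quantity
`ln det Σ + tr(S Σ⁻¹)` is at least `∑_{j≤r} ln ℓ_j + (p-r) ln σ̂² + p`, with equality at
the spiked fit `Σ̂_r` built from the top-`r` eigenpairs of `S`, and `Σ̂_r` belongs to the
working model family. -/
theorem stmt12 (p r : ℕ) (hp : 2 ≤ p) (hr1 : 1 ≤ r) (hrp : r ≤ p - 1)
    (ev : Fin p → ℝ) (v : Fin p → Fin p → ℝ)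
    (hdec : ∀ i j : Fin p, i < j → ev j < ev i)
    (hpos : ∀ j : Fin p, 0 < ev j)
    (horth : ∀ i j : Fin p, v i ⬝ᵥ v j = if i = j then (1 : ℝ) else 0)
    (S : Matrix (Fin p) (Fin p) ℝ)
    (hS : S = ∑ j : Fin p, ev j • Matrix.vecMulVec (v j) (v j))
    (σhat : ℝ)
    (hσhat : σhat = (1 / ((p : ℝ) - (r : ℝ))) *
      ∑ j ∈ Finset.univ.filter (fun j : Fin p => r ≤ (j : ℕ)), ev j)
    (hgap : ∀ j : Fin p, (j : ℕ) < r → σhat < ev j)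
    (Sig : Matrix (Fin p) (Fin p) ℝ)
    (hSig : Sig = (∑ j ∈ Finset.univ.filter (fun j : Fin p => (j : ℕ) < r),
        ev j • Matrix.vecMulVec (v j) (v j)) +
      σhat • ((1 : Matrix (Fin p) (Fin p) ℝ) -
        ∑ j ∈ Finset.univ.filter (fun j : Fin p => (j : ℕ) < r),
          Matrix.vecMulVec (v j) (v j))) :
    (∀ (Γ : Matrix (Fin p) (Fin r) ℝ) (μ : Fin r → ℝ) (t2 : ℝ),
      Γᵀ * Γ = 1 → (∀ i j : Fin r, i < j → μ j < μ i) → (∀ i : Fin r, t2 < μ i) → 0 < t2 →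
      Real.log (Γ * Matrix.diagonal μ * Γᵀ
            + t2 • ((1 : Matrix (Fin p) (Fin p) ℝ) - Γ * Γᵀ)).det
          + Matrix.trace (S * (Γ * Matrix.diagonal μ * Γᵀ
            + t2 • ((1 : Matrix (Fin p) (Fin p) ℝ) - Γ * Γᵀ))⁻¹)
        ≥ (∑ j ∈ Finset.univ.filter (fun j : Fin p => (j : ℕ) < r), Real.log (ev j))
          + ((p : ℝ) - (r : ℝ)) * Real.log σhat + (p : ℝ)) ∧
    (Real.log Sig.det + Matrix.trace (S * Sig⁻¹)
      = (∑ j ∈ Finset.univ.filter (fun j : Fin p => (j : ℕ) < r), Real.log (ev j))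
        + ((p : ℝ) - (r : ℝ)) * Real.log σhat + (p : ℝ)) ∧
    (∃ (Γ : Matrix (Fin p) (Fin r) ℝ) (μ : Fin r → ℝ) (t2 : ℝ),
      Γᵀ * Γ = 1 ∧ (∀ i j : Fin r, i < j → μ j < μ i) ∧ (∀ i : Fin r, t2 < μ i) ∧ 0 < t2 ∧
      Sig = Γ * Matrix.diagonal μ * Γᵀ
        + t2 • ((1 : Matrix (Fin p) (Fin p) ℝ) - Γ * Γᵀ)) :=
  stmt12_general p r hp hrp ev v hdec hpos horth S hS σhat hσhat hgap Sig hSig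
end
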